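/- arXiv:2209.00822 — 4 statements merged into one kernel-verified Lean document; each statement's English description precedes it below -/
import Mathlib

section
/- Let N ∈ ℕ, 1 ≤ n⁺ ≤ N, α ∈ (0,1), v > 0, let W⁺ be a probability weighting function, h⁺ the gain decision weights, J the transitional index, and y* the vector defined by y*_j = Y for 1 ≤ j ≤ J and y*_j = ( J·h⁺_j / ∑_{j'=1}^{J} h⁺_{j'} )^{α/(1−α)}·Y for J+1 ≤ j ≤ n⁺, where Y = v·(∑_{j'=1}^{J} h⁺_{j'})^{α/(1−α)} / [ (∑_{j'=1}^{J} h⁺_{j'})^{1/(1−α)} + J^{α/(1−α)}·∑_{j'=J+1}^{n⁺} (h⁺_{j'})^{1/(1−α)} ]. Write b̄ = 1/α and define μ_j = −(b̄/v)·(∑_{j'=1}^{n⁺} (y*_{j'})^{b̄})·(∑_{j'=j}^{n⁺} h⁺_{j'}) + b̄·∑_{j'=j}^{n⁺} (y*_{j'})^{b̄−1} for j ∈ {1,…,n⁺} and Λ = −(b̄/v)·∑_{j'=1}^{n⁺} (y*_{j'})^{b̄}. Then (y*, μ, Λ) satisfies the KKT conditions of the gain subproblem: (a) for every j ∈ {1,…,n⁺−1},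 b̄·(y*_j)^{b̄−1} + μ_{j+1} − μ_j + Λ·h⁺_j = 0; (b) b̄·(y*_{n⁺})^{b̄−1} − μ_{n⁺} + Λ·h⁺_{n⁺} = 0; (c) μ_{j+1}·(y*_j − y*_{j+1}) = 0 for every j ∈ {1,…,n⁺−1} and μ_1·y*_1 = 0; (d) ∑_{j=1}^{n⁺} h⁺_j·y*_j = v; (e) μ_j ≥ 0 for every j and 0 ≤ y*_1 ≤ y*_2 ≤ … ≤ y*_{n⁺}. -/
open Finset

/-- An inverse S-shaped function on `[0,1]`: strictly increasing, continuously
differentiable, with a derivative strictly decreasing then strictly increasing. -/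
def InverseSShaped (W : ℝ → ℝ) : Prop :=
  StrictMonoOn W (Set.Icc (0 : ℝ) 1) ∧
  ContDiffOn ℝ 1 W (Set.Icc (0 : ℝ) 1) ∧
  ∃ x₀ ∈ Set.Icc (0 : ℝ) 1,
    StrictAntiOn (deriv W) (Set.Icc (0 : ℝ) x₀) ∧ StrictMonoOn (deriv W) (Set.Icc x₀ 1)

/-- A probability weighting function: inverse S-shaped with `W 0 = 0` and `W 1 = 1`. -/
def IsPWF (W : ℝ → ℝ) : Prop :=
  InverseSShaped W ∧ W 0 = 0 ∧ W 1 = 1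

/-- Gain decision weights: `h⁺_j = W⁺((n−j+1)/N) − W⁺((n−j)/N)` for `j = 1,…,n`. -/
noncomputable def gainW (W : ℝ → ℝ) (N n j : ℕ) : ℝ :=
  W (((n : ℝ) - j + 1) / N) - W (((n : ℝ) - j) / N)

/-- The transitional index
`J = min{ j ∈ {1,…,n} : j = n ∨ j·h⁺_{j+1} ≥ ∑_{j'≤j} h⁺_{j'} }`. -/
noncomputable def transIdx (W : ℝ → ℝ) (N n : ℕ) : ℕ :=
  sInf {j : ℕ | 1 ≤ j ∧ j ≤ n ∧
    (j = n ∨ ∑ j' ∈ Finset.Icc 1 j, gainW W N n j' ≤ (j : ℝ) * gainW W N n (j + 1))}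

/-- Feasibility for the gain subproblem: `0 ≤ y_1 ≤ … ≤ y_n` and `∑ h⁺_j y_j = v`. -/
def GainFeasible (W : ℝ → ℝ) (N n : ℕ) (v : ℝ) (y : ℕ → ℝ) : Prop :=
  0 ≤ y 1 ∧ (∀ j ∈ Finset.Icc 1 (n - 1), y j ≤ y (j + 1)) ∧
  ∑ j ∈ Finset.Icc 1 n, gainW W N n j * y j = v

/-- The constant `Y` of the candidate optimal solution of the gain subproblem. -/
noncomputable def gainY (W : ℝ → ℝ) (N n : ℕ) (α v : ℝ) : ℝ :=
  v * (∑ j' ∈ Finset.Icc 1 (transIdx W N n), gainW W N n j') ^ (α / (1 - α)) /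
    ((∑ j' ∈ Finset.Icc 1 (transIdx W N n), gainW W N n j') ^ ((1 : ℝ) / (1 - α)) +
      (transIdx W N n : ℝ) ^ (α / (1 - α)) *
        ∑ j' ∈ Finset.Icc (transIdx W N n + 1) n, gainW W N n j' ^ ((1 : ℝ) / (1 - α)))

/-- The candidate optimal solution `y*` of the gain subproblem. -/
noncomputable def gainOpt (W : ℝ → ℝ) (N n : ℕ) (α v : ℝ) : ℕ → ℝ := fun j =>
  if j ≤ transIdx W N n then gainY W N n α v
  else ((transIdx W N n : ℝ) * gainW W N n j /
      ∑ j' ∈ Finset.Icc 1 (transIdx W N n), gainW W N n j') ^ (α / (1 - α)) * gainY W N n α v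


/-!
The multipliers are tail sums `μ_j = b̄ ∑_{i ≥ j} r_i` of the residuals
`r_i = (y*_i)^{b̄-1} - (J/S)·h⁺_i·Y^{b̄-1}`, `S = ∑_{i ≤ J} h⁺_i`, so stationarity telescopes.
Past `J` the power `(y*_i)^{b̄-1}` is proportional to `h⁺_i`, so `r_i = 0` there; this
identifies `Λ` and gives complementary slackness. For `j ≤ J` the tail sum is
`(J·S_{j-1} - (j-1)·S)/S · Y^{b̄-1}`, which is nonnegative because, by minimality of `J`, the
prefix averages `S_k / k` decrease up to `J`. Finally `y*` is nondecreasing because the weights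
are nondecreasing from `J` on: by the mean value theorem `N·h⁺_j` is a value of `W⁺'` at a
point moving left as `j` grows, and `W⁺'` decreases then increases.
-/

theorem Finset.sum_Icc_consecutive {M : Type*} [AddCommMonoid M] (f : ℕ → M) {i j k : ℕ}
    (hij : i ≤ j + 1) (hjk : j ≤ k) :
    ∑ x ∈ Icc i k, f x = ∑ x ∈ Icc i j, f x + ∑ x ∈ Icc (j + 1) k, f x := by
  simp only [← Ico_add_one_right_eq_Icc]
  exact (sum_Ico_consecutive f hij (by omega)).symm

theorem mul_sum_Icc_le_mul_sum_Icc (a : ℕ → ℝ) {k l : ℕ} (hkl : k ≤ l)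
    (ha : ∀ m, k ≤ m → m < l → m * a (m + 1) ≤ ∑ i ∈ Icc 1 m, a i) :
    k * ∑ i ∈ Icc 1 l, a i ≤ l * ∑ i ∈ Icc 1 k, a i := by
  induction l, hkl using Nat.le_induction with
  | base => exact le_rfl
  | succ l hkl ih =>
    have ih := ih fun m hkm hml => ha m hkm (by omega)
    have hl := ha l hkl (by omega)
    have hk : (k : ℝ) * a (l + 1) ≤ ∑ i ∈ Icc 1 k, a i := by
      rcases Nat.eq_zero_or_pos l with rfl | hl0
      · obtain rfl : k = 0 := by omega
        simp
      · refine le_of_mul_le_mul_left ?_ (show (0 : ℝ) < l by exact_mod_cast hl0)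
        nlinarith [(Nat.cast_nonneg k : (0 : ℝ) ≤ k)]
    rw [sum_Icc_succ_top (by omega)]
    push_cast
    linarith

theorem lt_of_lt_of_strictAntiOn_of_strictMonoOn {f : ℝ → ℝ} {l r x₀ a b c : ℝ}
    (hanti : StrictAntiOn f (Set.Icc l x₀)) (hmono : StrictMonoOn f (Set.Icc x₀ r))
    (hla : l ≤ a) (hab : a < b) (hbc : b < c) (hcr : c ≤ r) (h : f a < f b) : f b < f c := by
  have hx₀b : x₀ < b := by
    by_contra! hbx₀
    exact (hanti ⟨hla, hab.le.trans hbx₀⟩ ⟨hla.trans hab.le, hbx₀⟩ hab).not_gt h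
  exact hmono ⟨hx₀b.le, (hbc.trans_le hcr).le⟩ ⟨(hx₀b.trans hbc).le, hcr⟩ hbc

namespace InverseSShaped

variable {W : ℝ → ℝ}

theorem exists_sub_eq_deriv_mul (hW : InverseSShaped W) {a b : ℝ} (ha : 0 ≤ a) (hab : a < b)
    (hb : b ≤ 1) : ∃ c ∈ Set.Ioo a b, W b - W a = deriv W c * (b - a) := by
  have hsub : Set.Icc a b ⊆ Set.Icc 0 1 := Set.Icc_subset_Icc ha hb
  obtain ⟨c, hc, hslope⟩ := exists_deriv_eq_slope W hab (hW.2.1.continuousOn.mono hsub)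
    ((hW.2.1.differentiableOn one_ne_zero).mono (Set.Ioo_subset_Icc_self.trans hsub))
  refine ⟨c, hc, ?_⟩
  rw [hslope, div_mul_cancel₀ _ (sub_ne_zero.2 hab.ne')]

/-- By the mean value theorem the three increments are `δ • W'` at increasing points, and `W'`
decreases then increases. -/
theorem sub_lt_sub_of_sub_lt_sub (hW : InverseSShaped W) {t δ : ℝ} (ht : 0 ≤ t) (hδ : 0 < δ)
    (h1 : t + 3 * δ ≤ 1) (h : W (t + δ) - W t < W (t + 2 * δ) - W (t + δ)) :
    W (t + 2 * δ) - W (t + δ) < W (t + 3 * δ) - W (t + 2 * δ) := by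
  obtain ⟨x₀, -, hanti, hmono⟩ := hW.2.2
  obtain ⟨c₁, hc₁, e₁⟩ :=
    hW.exists_sub_eq_deriv_mul (b := t + δ) ht (by linarith) (by linarith)
  obtain ⟨c₂, hc₂, e₂⟩ := hW.exists_sub_eq_deriv_mul (a := t + δ) (b := t + 2 * δ)
    (by linarith) (by linarith) (by linarith)
  obtain ⟨c₃, hc₃, e₃⟩ := hW.exists_sub_eq_deriv_mul (a := t + 2 * δ) (b := t + 3 * δ)
    (by linarith) (by linarith) h1
  have hd : deriv W c₁ < deriv W c₂ :=
    lt_of_mul_lt_mul_right (by rw [e₁, e₂] at h; ring_nf at h; linarith) hδ.le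
  have := lt_of_lt_of_strictAntiOn_of_strictMonoOn (c := c₃) hanti hmono
    (by linarith [hc₁.1]) (by linarith [hc₁.2, hc₂.1]) (by linarith [hc₂.2, hc₃.1])
    (by linarith [hc₃.2]) hd
  calc W (t + 2 * δ) - W (t + δ) = deriv W c₂ * δ := by rw [e₂]; ring
    _ < deriv W c₃ * δ := mul_lt_mul_of_pos_right this hδ
    _ = W (t + 3 * δ) - W (t + 2 * δ) := by rw [e₃]; ring

end InverseSShaped

section GainWeights

variable {W : ℝ → ℝ} {N n : ℕ}

theorem gainW_pos (hW : StrictMonoOn W (Set.Icc 0 1)) (hnN : n ≤ N) {j : ℕ} (hj : j ∈ Icc 1 n) :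
    0 < gainW W N n j := by
  obtain ⟨hj1, hjn⟩ := mem_Icc.1 hj
  have hN : (0 : ℝ) < N := by exact_mod_cast (show 0 < N by omega)
  have hjn' : (j : ℝ) ≤ n := by exact_mod_cast hjn
  have hj1' : (1 : ℝ) ≤ j := by exact_mod_cast hj1
  have hnN' : (n : ℝ) ≤ N := by exact_mod_cast hnN
  refine sub_pos.2 (hW ⟨?_, ?_⟩ ⟨?_, ?_⟩ ?_)
  · exact div_nonneg (by linarith) hN.le
  · rw [div_le_one hN]; linarith
  · exact div_nonneg (by linarith) hN.le
  · rw [div_le_one hN]; linarith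
  · exact div_lt_div_of_pos_right (by linarith) hN

/-- `h⁺_{j+2}`, `h⁺_{j+1}`, `h⁺_j` are the increments of `W` over three consecutive cells of the
grid `1/N`, from left to right. -/
theorem gainW_succ_le_gainW_succ_succ (hW : InverseSShaped W) (hnN : n ≤ N) {j : ℕ}
    (hj1 : 1 ≤ j) (hjn : j + 2 ≤ n) (hle : gainW W N n j ≤ gainW W N n (j + 1)) :
    gainW W N n (j + 1) ≤ gainW W N n (j + 2) := by
  have hN : (0 : ℝ) < N := by exact_mod_cast (show 0 < N by omega)
  have hjn' : (j : ℝ) + 2 ≤ n := by exact_mod_cast hjn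
  have hj1' : (1 : ℝ) ≤ j := by exact_mod_cast hj1
  have hnN' : (n : ℝ) ≤ N := by exact_mod_cast hnN
  set t : ℝ := ((n : ℝ) - j - 2) / N
  set δ : ℝ := 1 / N
  have e₀ : gainW W N n j = W (t + 3 * δ) - W (t + 2 * δ) := by
    simp only [gainW, t, δ]; ring_nf
  have e₁ : gainW W N n (j + 1) = W (t + 2 * δ) - W (t + δ) := by
    simp only [gainW, t, δ]; push_cast; ring_nf
  have e₂ : gainW W N n (j + 2) = W (t + δ) - W t := by
    simp only [gainW, t, δ]; push_cast; ring_nf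
  have ht3 : t + 3 * δ ≤ 1 := by
    rw [show t + 3 * δ = ((n : ℝ) - j + 1) / N by simp only [t, δ]; ring, div_le_one hN]
    linarith
  by_contra! hlt
  rw [e₁, e₂] at hlt
  rw [e₀, e₁] at hle
  linarith [hW.sub_lt_sub_of_sub_lt_sub (div_nonneg (by linarith) hN.le) (by positivity) ht3 hlt]

theorem transIdx_spec (hn : 1 ≤ n) :
    1 ≤ transIdx W N n ∧ transIdx W N n ≤ n ∧
      (transIdx W N n = n ∨
        ∑ i ∈ Icc 1 (transIdx W N n), gainW W N n i ≤
          transIdx W N n * gainW W N n (transIdx W N n + 1)) :=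
  Nat.sInf_mem (s := {j : ℕ | 1 ≤ j ∧ j ≤ n ∧
    (j = n ∨ ∑ i ∈ Icc 1 j, gainW W N n i ≤ (j : ℝ) * gainW W N n (j + 1))})
    ⟨n, hn, le_rfl, Or.inl rfl⟩

theorem lt_sum_of_lt_transIdx (hn : 1 ≤ n) {k : ℕ} (hk : 1 ≤ k) (hkJ : k < transIdx W N n) :
    k * gainW W N n (k + 1) < ∑ i ∈ Icc 1 k, gainW W N n i := by
  by_contra! hle
  exact Nat.notMem_of_lt_sInf hkJ ⟨hk, by linarith [(transIdx_spec (W := W) (N := N) hn).2.1],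
    Or.inr hle⟩

theorem mul_sum_transIdx_le (hn : 1 ≤ n) {k : ℕ} (hk : k ≤ transIdx W N n) :
    k * ∑ i ∈ Icc 1 (transIdx W N n), gainW W N n i ≤
      transIdx W N n * ∑ i ∈ Icc 1 k, gainW W N n i := by
  refine mul_sum_Icc_le_mul_sum_Icc _ hk fun m _ hm => ?_
  rcases Nat.eq_zero_or_pos m with rfl | hm0
  · simp
  · exact (lt_sum_of_lt_transIdx hn hm0 hm).le

/-- The first step holds because `h⁺_J ≤ (∑_{i ≤ J} h⁺_i) / J ≤ h⁺_{J+1}`. -/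
theorem gainW_le_gainW_succ (hW : InverseSShaped W) (hn : 1 ≤ n) (hnN : n ≤ N) {j : ℕ}
    (hJj : transIdx W N n ≤ j) (hjn : j + 1 ≤ n) : gainW W N n j ≤ gainW W N n (j + 1) := by
  obtain ⟨hJ1, -, hJ⟩ := transIdx_spec (W := W) (N := N) hn
  set J := transIdx W N n
  induction j, hJj using Nat.le_induction with
  | base =>
    have hS : ∑ i ∈ Icc 1 J, gainW W N n i ≤ J * gainW W N n (J + 1) :=
      hJ.resolve_left (by omega)
    have havg := mul_sum_transIdx_le (W := W) (N := N) hn (k := J - 1) (by omega)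
    have hsplit := sum_Icc_consecutive (gainW W N n) (i := 1) (j := J - 1) (k := J) (by omega)
      (by omega)
    rw [Nat.sub_add_cancel hJ1, Icc_self, sum_singleton] at hsplit
    rw [Nat.cast_sub hJ1, Nat.cast_one] at havg
    have hJh : (J : ℝ) * gainW W N n J ≤ ∑ i ∈ Icc 1 J, gainW W N n i := by
      linear_combination havg - (J : ℝ) * hsplit
    exact le_of_mul_le_mul_left (hJh.trans hS) (by exact_mod_cast hJ1)
  | succ j hJj ih =>
    exact gainW_succ_le_gainW_succ_succ hW hnN (by omega) (by omega) (ih (by omega))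

end GainWeights

theorem sum_Icc_one_pos {h : ℕ → ℝ} {n J : ℕ} (hh : ∀ i ∈ Icc 1 n, 0 < h i) (hJ1 : 1 ≤ J)
    (hJn : J ≤ n) : 0 < ∑ i ∈ Icc 1 J, h i :=
  sum_pos (fun i hi => hh i (Icc_subset_Icc_right hJn hi)) ⟨1, mem_Icc.2 ⟨le_rfl, hJ1⟩⟩

/-- The vector `y*` built from an arbitrary weight sequence `h` and index `J`. -/
noncomputable def gainCandidate (h : ℕ → ℝ) (J : ℕ) (α Y : ℝ) (j : ℕ) : ℝ :=
  if j ≤ J then Y else ((J : ℝ) * h j / ∑ i ∈ Icc 1 J, h i) ^ (α / (1 - α)) * Y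

theorem gainOpt_eq_gainCandidate (W : ℝ → ℝ) (N n : ℕ) (α v : ℝ) :
    gainOpt W N n α v = gainCandidate (gainW W N n) (transIdx W N n) α (gainY W N n α v) :=
  rfl

namespace gainCandidate

/-- `1/α` times this is the residual `b̄ (y*_i)^{b̄-1} + Λ h_i` of stationarity, once `Λ` is
known to be `-b̄ (J/S) Y^{b̄-1}`. -/
noncomputable def residual (h : ℕ → ℝ) (J : ℕ) (α Y : ℝ) (i : ℕ) : ℝ :=
  gainCandidate h J α Y i ^ (1 / α - 1) - J * h i / (∑ i ∈ Icc 1 J, h i) * Y ^ (1 / α - 1)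

variable {h : ℕ → ℝ} {n J : ℕ} {α Y : ℝ}

theorem of_le {j : ℕ} (hj : j ≤ J) : gainCandidate h J α Y j = Y := if_pos hj

theorem of_lt {j : ℕ} (hj : J < j) :
    gainCandidate h J α Y j = ((J : ℝ) * h j / ∑ i ∈ Icc 1 J, h i) ^ (α / (1 - α)) * Y :=
  if_neg hj.not_ge

theorem pos (hh : ∀ i ∈ Icc 1 n, 0 < h i) (hJ1 : 1 ≤ J) (hJn : J ≤ n) (hY : 0 < Y) {j : ℕ}
    (hj : j ∈ Icc 1 n) : 0 < gainCandidate h J α Y j := by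
  rcases le_or_gt j J with hjJ | hJj
  · rwa [of_le hjJ]
  · rw [of_lt hJj]
    have := hh j hj
    have := sum_Icc_one_pos hh hJ1 hJn
    have : (0 : ℝ) < J := by exact_mod_cast hJ1
    positivity

/-- The exponent `α / (1 - α)` in `y*` is the reciprocal of `1/α - 1`. -/
theorem rpow_sub_one_of_lt (hα0 : 0 < α) (hα1 : α < 1) (hh : ∀ i ∈ Icc 1 n, 0 < h i)
    (hJ1 : 1 ≤ J) (hJn : J ≤ n) (hY : 0 < Y) {j : ℕ} (hJj : J < j) (hjn : j ≤ n) :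
    gainCandidate h J α Y j ^ (1 / α - 1) =
      J * h j / (∑ i ∈ Icc 1 J, h i) * Y ^ (1 / α - 1) := by
  have hx : 0 ≤ (J : ℝ) * h j / ∑ i ∈ Icc 1 J, h i :=
    (div_pos (mul_pos (by exact_mod_cast hJ1) (hh j (mem_Icc.2 ⟨by omega, hjn⟩)))
      (sum_Icc_one_pos hh hJ1 hJn)).le
  have hexp : α / (1 - α) * (1 / α - 1) = 1 := by
    field_simp [hα0.ne', (sub_pos.2 hα1).ne']
  rw [of_lt hJj, Real.mul_rpow (Real.rpow_nonneg hx _) hY.le, ← Real.rpow_mul hx, hexp,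
    Real.rpow_one]

theorem residual_of_le {i : ℕ} (hi : i ≤ J) :
    residual h J α Y i = (1 - J * h i / ∑ i ∈ Icc 1 J, h i) * Y ^ (1 / α - 1) := by
  rw [residual, of_le hi]
  ring

theorem sum_Icc_residual_eq_zero (hα0 : 0 < α) (hα1 : α < 1) (hh : ∀ i ∈ Icc 1 n, 0 < h i)
    (hJ1 : 1 ≤ J) (hJn : J ≤ n) (hY : 0 < Y) {j : ℕ} (hJj : J ≤ j) :
    ∑ i ∈ Icc (j + 1) n, residual h J α Y i = 0 :=
  sum_eq_zero fun i hi => by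
    obtain ⟨hi1, hin⟩ := mem_Icc.1 hi
    rw [residual, rpow_sub_one_of_lt hα0 hα1 hh hJ1 hJn hY (by omega) hin, sub_self]

theorem sum_Icc_residual (hα0 : 0 < α) (hα1 : α < 1) (hh : ∀ i ∈ Icc 1 n, 0 < h i)
    (hJ1 : 1 ≤ J) (hJn : J ≤ n) (hY : 0 < Y) {k : ℕ} (hk : k ≤ J) :
    ∑ i ∈ Icc (k + 1) n, residual h J α Y i =
      (J * ∑ i ∈ Icc 1 k, h i - k * ∑ i ∈ Icc 1 J, h i) / (∑ i ∈ Icc 1 J, h i) *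
        Y ^ (1 / α - 1) := by
  have hS := sum_Icc_one_pos hh hJ1 hJn
  have hsplit := sum_Icc_consecutive h (i := 1) (j := k) (by omega) hk
  rw [sum_Icc_consecutive _ (j := J) (by omega) hJn,
    sum_Icc_residual_eq_zero hα0 hα1 hh hJ1 hJn hY le_rfl, add_zero,
    sum_congr rfl fun i hi => residual_of_le (mem_Icc.1 hi).2, ← sum_mul, sum_sub_distrib,
    sum_const, Nat.card_Icc, nsmul_eq_mul, ← sum_div, ← mul_sum, Nat.cast_sub (by omega)]
  field_simp
  push_cast
  linear_combination (J : ℝ) * hsplit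

theorem sum_Icc_residual_nonneg (hα0 : 0 < α) (hα1 : α < 1) (hh : ∀ i ∈ Icc 1 n, 0 < h i)
    (hJ1 : 1 ≤ J) (hJn : J ≤ n) (hY : 0 < Y)
    (havg : ∀ k ≤ J, k * ∑ i ∈ Icc 1 J, h i ≤ J * ∑ i ∈ Icc 1 k, h i) {j : ℕ} (hj : 1 ≤ j) :
    0 ≤ ∑ i ∈ Icc j n, residual h J α Y i := by
  obtain ⟨k, rfl⟩ : ∃ k, j = k + 1 := ⟨j - 1, by omega⟩
  rcases le_or_gt k J with hkJ | hJk
  · rw [sum_Icc_residual hα0 hα1 hh hJ1 hJn hY hkJ]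
    have := sum_Icc_one_pos hh hJ1 hJn
    have := sub_nonneg.2 (havg k hkJ)
    positivity
  · rw [sum_Icc_residual_eq_zero hα0 hα1 hh hJ1 hJn hY hJk.le]

/-- Writing `(y*_i)^{1/α} = (y*_i)^{1/α-1} y*_i`, the residual part contributes
`Y ∑_i residual_i = 0`, since `y*_i = Y` wherever the residual is nonzero. -/
theorem sum_rpow_one_div (hα0 : 0 < α) (hα1 : α < 1) (hh : ∀ i ∈ Icc 1 n, 0 < h i)
    (hJ1 : 1 ≤ J) (hJn : J ≤ n) (hY : 0 < Y) :
    ∑ i ∈ Icc 1 n, gainCandidate h J α Y i ^ (1 / α) =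
      J / (∑ i ∈ Icc 1 J, h i) * Y ^ (1 / α - 1) *
        ∑ i ∈ Icc 1 n, h i * gainCandidate h J α Y i := by
  have hterm : ∀ i ∈ Icc 1 n, gainCandidate h J α Y i ^ (1 / α) =
      J / (∑ i ∈ Icc 1 J, h i) * Y ^ (1 / α - 1) * (h i * gainCandidate h J α Y i) +
        residual h J α Y i * Y := by
    intro i hi
    have hc := (pos hh hJ1 hJn hY hi (α := α)).ne'
    rw [← div_mul_cancel₀ (gainCandidate h J α Y i ^ (1 / α)) hc, ← Real.rpow_sub_one hc,
      residual]
    rcases le_or_gt i J with hiJ | hJi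
    · rw [of_le hiJ]
      ring
    · rw [rpow_sub_one_of_lt hα0 hα1 hh hJ1 hJn hY hJi (mem_Icc.1 hi).2]
      ring
  have hres := sum_Icc_residual hα0 hα1 hh hJ1 hJn hY (Nat.zero_le J)
  rw [zero_add, Icc_eq_empty_of_lt zero_lt_one, sum_empty, mul_zero, Nat.cast_zero, zero_mul,
    sub_self, zero_div, zero_mul] at hres
  rw [sum_congr rfl hterm, sum_add_distrib, ← mul_sum, ← sum_mul, hres, zero_mul, add_zero]

theorem lagrange_eq (hα0 : 0 < α) (hα1 : α < 1) (hh : ∀ i ∈ Icc 1 n, 0 < h i) (hJ1 : 1 ≤ J)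
    (hJn : J ≤ n) (hY : 0 < Y) {v : ℝ} (hv : v ≠ 0)
    (hd : ∑ i ∈ Icc 1 n, h i * gainCandidate h J α Y i = v) :
    -(1 / α / v) * ∑ i ∈ Icc 1 n, gainCandidate h J α Y i ^ (1 / α) =
      -(1 / α) * (J / (∑ i ∈ Icc 1 J, h i) * Y ^ (1 / α - 1)) := by
  rw [sum_rpow_one_div hα0 hα1 hh hJ1 hJn hY, hd]
  field_simp

theorem multiplier_eq (hα0 : 0 < α) (hα1 : α < 1) (hh : ∀ i ∈ Icc 1 n, 0 < h i) (hJ1 : 1 ≤ J)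
    (hJn : J ≤ n) (hY : 0 < Y) {v : ℝ} (hv : v ≠ 0)
    (hd : ∑ i ∈ Icc 1 n, h i * gainCandidate h J α Y i = v) (j : ℕ) :
    -(1 / α / v) * (∑ i ∈ Icc 1 n, gainCandidate h J α Y i ^ (1 / α)) * ∑ i ∈ Icc j n, h i +
        1 / α * ∑ i ∈ Icc j n, gainCandidate h J α Y i ^ (1 / α - 1) =
      1 / α * ∑ i ∈ Icc j n, residual h J α Y i := by
  rw [lagrange_eq hα0 hα1 hh hJ1 hJn hY hv hd]
  simp only [residual, sum_sub_distrib, ← sum_mul, ← sum_div, ← mul_sum]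
  ring

theorem sum_mul_eq (hα1 : α < 1) (hh : ∀ i ∈ Icc 1 n, 0 < h i) (hJ1 : 1 ≤ J) (hJn : J ≤ n) :
    ∑ i ∈ Icc 1 n, h i * gainCandidate h J α Y i =
      ((∑ i ∈ Icc 1 J, h i) ^ (1 / (1 - α)) +
        (J : ℝ) ^ (α / (1 - α)) * ∑ i ∈ Icc (J + 1) n, h i ^ (1 / (1 - α))) /
        (∑ i ∈ Icc 1 J, h i) ^ (α / (1 - α)) * Y := by
  have hS := sum_Icc_one_pos hh hJ1 hJn
  have hγ : 1 / (1 - α) = α / (1 - α) + 1 := by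
    field_simp [(sub_pos.2 hα1).ne']
    ring
  have hterm : ∀ i ∈ Icc (J + 1) n, h i * gainCandidate h J α Y i =
      (J : ℝ) ^ (α / (1 - α)) * h i ^ (1 / (1 - α)) / (∑ i ∈ Icc 1 J, h i) ^ (α / (1 - α)) *
        Y := by
    intro i hi
    obtain ⟨hi1, hin⟩ := mem_Icc.1 hi
    have hhi := hh i (mem_Icc.2 ⟨by omega, hin⟩)
    rw [of_lt (by omega), Real.div_rpow (by positivity) hS.le,
      Real.mul_rpow (by positivity) hhi.le, hγ, Real.rpow_add_one hhi.ne']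
    ring
  rw [sum_Icc_consecutive _ (j := J) (by omega) hJn, sum_congr rfl hterm,
    sum_congr rfl fun i hi => by rw [of_le (mem_Icc.1 hi).2], ← sum_mul, ← sum_mul, ← sum_div,
    ← mul_sum, hγ, Real.rpow_add_one hS.ne']
  field_simp

theorem le_succ (hα0 : 0 < α) (hα1 : α < 1) (hh : ∀ i ∈ Icc 1 n, 0 < h i) (hJ1 : 1 ≤ J)
    (hJn : J ≤ n) (hY : 0 < Y) (hJ : J = n ∨ ∑ i ∈ Icc 1 J, h i ≤ J * h (J + 1))
    (hmono : ∀ j, J < j → j + 1 ≤ n → h j ≤ h (j + 1)) {j : ℕ} (hjn : j + 1 ≤ n) :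
    gainCandidate h J α Y j ≤ gainCandidate h J α Y (j + 1) := by
  have hS := sum_Icc_one_pos hh hJ1 hJn
  have hβ : 0 ≤ α / (1 - α) := div_nonneg hα0.le (sub_pos.2 hα1).le
  rcases lt_trichotomy j J with hjJ | rfl | hJj
  · rw [of_le hjJ.le, of_le hjJ]
  · rw [of_le le_rfl, of_lt (Nat.lt_succ_self j)]
    refine le_mul_of_one_le_left hY.le (Real.one_le_rpow ?_ hβ)
    rw [le_div_iff₀ hS, one_mul]
    exact hJ.resolve_left (by omega)
  · rw [of_lt hJj, of_lt (by omega)]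
    have := hh j (mem_Icc.2 ⟨by omega, by omega⟩)
    gcongr
    exact hmono j hJj hjn

end gainCandidate

section GainSolution

variable {W : ℝ → ℝ} {N n : ℕ} {α v : ℝ}

theorem gainY_denominator_pos (hW : StrictMonoOn W (Set.Icc 0 1)) (hn : 1 ≤ n) (hnN : n ≤ N) :
    0 < (∑ i ∈ Icc 1 (transIdx W N n), gainW W N n i) ^ (1 / (1 - α)) +
      (transIdx W N n : ℝ) ^ (α / (1 - α)) *
        ∑ i ∈ Icc (transIdx W N n + 1) n, gainW W N n i ^ (1 / (1 - α)) := by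
  obtain ⟨hJ1, hJn, -⟩ := transIdx_spec (W := W) (N := N) hn
  have hS := sum_Icc_one_pos (fun i hi => gainW_pos hW hnN hi) hJ1 hJn
  have hQ : 0 ≤ ∑ i ∈ Icc (transIdx W N n + 1) n, gainW W N n i ^ (1 / (1 - α)) :=
    sum_nonneg fun i hi =>
      (Real.rpow_pos_of_pos (gainW_pos hW hnN (Icc_subset_Icc_left (by omega) hi)) _).le
  have : (0 : ℝ) < transIdx W N n := by exact_mod_cast hJ1
  positivity

theorem gainY_pos (hW : StrictMonoOn W (Set.Icc 0 1)) (hn : 1 ≤ n) (hnN : n ≤ N) (hv : 0 < v) :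
    0 < gainY W N n α v := by
  obtain ⟨hJ1, hJn, -⟩ := transIdx_spec (W := W) (N := N) hn
  have hS := sum_Icc_one_pos (fun i hi => gainW_pos hW hnN hi) hJ1 hJn
  have hD := gainY_denominator_pos (α := α) hW hn hnN
  unfold gainY
  positivity

theorem sum_gainW_mul_gainOpt (hW : StrictMonoOn W (Set.Icc 0 1)) (hn : 1 ≤ n) (hnN : n ≤ N)
    (hα1 : α < 1) : ∑ i ∈ Icc 1 n, gainW W N n i * gainOpt W N n α v i = v := by
  obtain ⟨hJ1, hJn, -⟩ := transIdx_spec (W := W) (N := N) hn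
  have hh : ∀ i ∈ Icc 1 n, 0 < gainW W N n i := fun i hi => gainW_pos hW hnN hi
  have hS := sum_Icc_one_pos hh hJ1 hJn
  have hD := gainY_denominator_pos (α := α) hW hn hnN
  rw [gainOpt_eq_gainCandidate, gainCandidate.sum_mul_eq hα1 hh hJ1 hJn, gainY]
  field_simp

end GainSolution

/-- with `b̄ = 1/α`, the multipliers
`μ_j = −(b̄/v)·(∑_{j'} (y*_{j'})^{b̄})·(∑_{j'≥j} h⁺_{j'}) + b̄·∑_{j'≥j} (y*_{j'})^{b̄−1}` and
`Λ = −(b̄/v)·∑_{j'} (y*_{j'})^{b̄}` satisfy, together with `y*`, the KKT conditions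
(a)–(e) of the gain subproblem. -/
theorem gainOpt_satisfies_KKT (W : ℝ → ℝ) (N n : ℕ) (α v : ℝ) (μ : ℕ → ℝ) (Λ : ℝ)
    (hW : IsPWF W) (hn1 : 1 ≤ n) (hnN : n ≤ N)
    (hα0 : 0 < α) (hα1 : α < 1) (hv : 0 < v)
    (hμ : ∀ j ∈ Finset.Icc 1 n, μ j =
      -((1 / α) / v) * (∑ j' ∈ Finset.Icc 1 n, gainOpt W N n α v j' ^ (1 / α)) *
          (∑ j' ∈ Finset.Icc j n, gainW W N n j') +
        (1 / α) * ∑ j' ∈ Finset.Icc j n, gainOpt W N n α v j' ^ (1 / α - 1))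
    (hΛ : Λ = -((1 / α) / v) * ∑ j' ∈ Finset.Icc 1 n, gainOpt W N n α v j' ^ (1 / α)) :
    -- (a) stationarity for j = 1, …, n−1
    (∀ j ∈ Finset.Icc 1 (n - 1),
      (1 / α) * gainOpt W N n α v j ^ (1 / α - 1) + μ (j + 1) - μ j + Λ * gainW W N n j = 0) ∧
    -- (b) stationarity for j = n
    (1 / α) * gainOpt W N n α v n ^ (1 / α - 1) - μ n + Λ * gainW W N n n = 0 ∧
    -- (c) complementary slackness
    (∀ j ∈ Finset.Icc 1 (n - 1),
      μ (j + 1) * (gainOpt W N n α v j - gainOpt W N n α v (j + 1)) = 0) ∧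
    μ 1 * gainOpt W N n α v 1 = 0 ∧
    -- (d) equality constraint
    ∑ j ∈ Finset.Icc 1 n, gainW W N n j * gainOpt W N n α v j = v ∧
    -- (e) sign conditions and monotonicity
    (∀ j ∈ Finset.Icc 1 n, 0 ≤ μ j) ∧
    0 ≤ gainOpt W N n α v 1 ∧
    ∀ j ∈ Finset.Icc 1 (n - 1), gainOpt W N n α v j ≤ gainOpt W N n α v (j + 1) := by
  obtain ⟨hJ1, hJn, hJ⟩ := transIdx_spec (W := W) (N := N) hn1
  have hh : ∀ i ∈ Icc 1 n, 0 < gainW W N n i := fun i hi => gainW_pos hW.1.1 hnN hi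
  have hY := gainY_pos (α := α) hW.1.1 hn1 hnN hv
  have hd := sum_gainW_mul_gainOpt (v := v) hW.1.1 hn1 hnN hα1
  rw [gainOpt_eq_gainCandidate] at hμ hΛ hd ⊢
  rw [gainCandidate.lagrange_eq hα0 hα1 hh hJ1 hJn hY hv.ne' hd] at hΛ
  replace hμ := fun j hj =>
    (hμ j hj).trans (gainCandidate.multiplier_eq hα0 hα1 hh hJ1 hJn hY hv.ne' hd j)
  refine ⟨fun j hj => ?_, ?_, fun j hj => ?_, ?_, hd, fun j hj => ?_, ?_, fun j hj => ?_⟩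
  · obtain ⟨hj1, hjn⟩ := mem_Icc.1 hj
    rw [hμ j (mem_Icc.2 ⟨hj1, by omega⟩), hμ (j + 1) (mem_Icc.2 ⟨by omega, by omega⟩),
      ← add_sum_Ioc_eq_sum_Icc (by omega : j ≤ n), Icc_add_one_left_eq_Ioc, hΛ,
      gainCandidate.residual]
    ring
  · rw [hμ n (mem_Icc.2 ⟨hn1, le_rfl⟩), hΛ, Icc_self, sum_singleton, gainCandidate.residual]
    ring
  · obtain ⟨hj1, hjn⟩ := mem_Icc.1 hj
    rcases le_or_gt (transIdx W N n) j with hJj | hjJ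
    · rw [hμ (j + 1) (mem_Icc.2 ⟨by omega, by omega⟩),
        gainCandidate.sum_Icc_residual_eq_zero hα0 hα1 hh hJ1 hJn hY hJj, mul_zero, zero_mul]
    · rw [gainCandidate.of_le hjJ.le, gainCandidate.of_le hjJ, sub_self, mul_zero]
  · rw [hμ 1 (mem_Icc.2 ⟨le_rfl, hn1⟩),
      gainCandidate.sum_Icc_residual hα0 hα1 hh hJ1 hJn hY (Nat.zero_le _) (k := 0)]
    simp
  · rw [hμ j hj]
    exact mul_nonneg (by positivity) (gainCandidate.sum_Icc_residual_nonneg hα0 hα1 hh hJ1 hJn hY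
      (fun k hk => mul_sum_transIdx_le hn1 hk) (mem_Icc.1 hj).1)
  · rw [gainCandidate.of_le hJ1]
    exact hY.le
  · exact gainCandidate.le_succ hα0 hα1 hh hJ1 hJn hY hJ
      (fun j hJj hjn => gainW_le_gainW_succ hW.1 hn1 hnN hJj.le hjn) (by grind)
end

section
/- Let N ∈ ℕ and let W⁺ be a probability weighting function. For 1 ≤ k ≤ N write h⁺_{j,k} = W⁺((k−j+1)/N) − W⁺((k−j)/N) for j = 1,…,k, and let J(k) be the transitional index for k gain outcomes. Suppose k ≥ 2 and J(k) ≤ k − 1. Then for every j with J(k) ≤ j ≤ k − 1 it holds that j · h⁺_{j+1,k} ≥ ∑_{j'=1}^{j} h⁺_{j',k}. -/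
open Finset

/-!
With `δ = 1/N`, the gain weights are the increments `h⁺_j = D((k - j)/N)` of
`D x = W (x + δ) - W x`. Since `W'` first decreases and then increases, once
`D' = W'(· + δ) - W'` is nonnegative somewhere it is positive from then on; by the mean value
theorem, once `D` fails to decrease it strictly increases. As `j` runs backwards in `x`, this
says: if `h⁺_{j+2} < h⁺_{j+1}`, then `h⁺_{j+1} < h⁺_i` for every `i ≤ j`, so
`∑_{i ≤ j} h⁺_i > j h⁺_{j+1}`. Hence, once `j h⁺_{j+1} ≥ ∑_{i ≤ j} h⁺_i`, also
`h⁺_{j+2} ≥ h⁺_{j+1}`, and the inequality passes to `j + 1`.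
-/

lemma lt_shift_of_le_shift_of_strictAntiOn_of_strictMonoOn {g : ℝ → ℝ} {x₀ δ x y : ℝ}
    (hA : StrictAntiOn g (Set.Icc 0 x₀)) (hM : StrictMonoOn g (Set.Icc x₀ 1))
    (hδ : 0 < δ) (hx : 0 ≤ x) (hxy : x < y) (hy : y + δ ≤ 1) (h : g x ≤ g (x + δ)) :
    g y < g (y + δ) := by
  by_cases hyx₀ : x₀ ≤ y
  · exact hM ⟨hyx₀, by linarith⟩ ⟨by linarith, hy⟩ (by linarith)
  have hgyx : g y < g x := hA ⟨hx, by linarith⟩ ⟨by linarith, by linarith⟩ hxy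
  by_cases hxδ : x + δ ≤ x₀
  · linarith [hA ⟨hx, by linarith⟩ ⟨by linarith, hxδ⟩ (by linarith : x < x + δ)]
  · have := hM ⟨by linarith, by linarith⟩ ⟨by linarith, hy⟩ (by linarith : x + δ < y + δ)
    linarith

namespace InverseSShaped

variable {W : ℝ → ℝ} (hW : InverseSShaped W)
include hW

lemma hasDerivAt {p : ℝ} (hp₀ : 0 < p) (hp₁ : p < 1) : HasDerivAt W (deriv W p) p :=
  ((hW.2.1.differentiableOn one_ne_zero p ⟨hp₀.le, hp₁.le⟩).differentiableAt
    (Icc_mem_nhds hp₀ hp₁)).hasDerivAt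

lemma exists_increment_sub_increment_eq {δ a b : ℝ} (hδ : 0 < δ) (ha : 0 ≤ a) (hab : a < b)
    (hb : b + δ ≤ 1) :
    ∃ c ∈ Set.Ioo a b, (W (b + δ) - W b) - (W (a + δ) - W a) =
      (deriv W (c + δ) - deriv W c) * (b - a) := by
  have hW_cont : ContinuousOn W (Set.Icc 0 1) := hW.2.1.continuousOn
  have hcont : ContinuousOn (fun x => W (x + δ) - W x) (Set.Icc a b) := by
    refine (hW_cont.comp (continuous_add_const δ).continuousOn ?_).sub (hW_cont.mono ?_)
    · exact fun x hx => ⟨by linarith [hx.1], by linarith [hx.2]⟩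
    · exact fun x hx => ⟨by linarith [hx.1], by linarith [hx.2]⟩
  have hderiv : ∀ x ∈ Set.Ioo a b,
      HasDerivAt (fun x => W (x + δ) - W x) (deriv W (x + δ) - deriv W x) x := by
    intro x hx
    have hshift :=
      (hW.hasDerivAt (p := x + δ) (by linarith [hx.1]) (by linarith [hx.2])).comp_add_const x δ
    exact hshift.sub (hW.hasDerivAt (by linarith [hx.1]) (by linarith [hx.2]))
  obtain ⟨c, hc, hslope⟩ := exists_hasDerivAt_eq_slope _ _ hab hcont hderiv
  refine ⟨c, hc, ?_⟩
  rw [hslope, div_mul_cancel₀ _ (sub_ne_zero.mpr hab.ne')]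

lemma increment_lt_of_le {δ s t u : ℝ} (hδ : 0 < δ) (hs : 0 ≤ s) (hst : s < t) (htu : t < u)
    (hu : u + δ ≤ 1) (h : W (s + δ) - W s ≤ W (t + δ) - W t) :
    W (t + δ) - W t < W (u + δ) - W u := by
  obtain ⟨x₀, -, hA, hM⟩ := hW.2.2
  obtain ⟨c₁, hc₁, hD₁⟩ := hW.exists_increment_sub_increment_eq hδ hs hst (by linarith)
  obtain ⟨c₂, hc₂, hD₂⟩ := hW.exists_increment_sub_increment_eq hδ (by linarith) htu hu
  have hc₁_nonneg : deriv W c₁ ≤ deriv W (c₁ + δ) := by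
    have : 0 ≤ (deriv W (c₁ + δ) - deriv W c₁) * (t - s) := by linarith
    linarith [nonneg_of_mul_nonneg_left this (by linarith)]
  have hc₂_pos : deriv W c₂ < deriv W (c₂ + δ) :=
    lt_shift_of_le_shift_of_strictAntiOn_of_strictMonoOn hA hM hδ (by linarith [hc₁.1])
      (by linarith [hc₁.2, hc₂.1]) (by linarith [hc₂.2]) hc₁_nonneg
  nlinarith [hc₂.1]

end InverseSShaped

lemma gainW_eq (W : ℝ → ℝ) (N k j : ℕ) :
    gainW W N k j = W (((k : ℝ) - j) / N + 1 / N) - W (((k : ℝ) - j) / N) := by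
  rw [gainW, ← add_div]

lemma gainW_lt_of_gainW_succ_lt {W : ℝ → ℝ} (hW : InverseSShaped W) {N k i m : ℕ}
    (hkN : k ≤ N) (hi : 1 ≤ i) (him : i < m) (hmk : m + 1 ≤ k)
    (h : gainW W N k (m + 1) < gainW W N k m) : gainW W N k m < gainW W N k i := by
  have hN : (0 : ℝ) < N := by exact_mod_cast (by omega : 0 < N)
  have hkN' : (k : ℝ) ≤ N := by exact_mod_cast hkN
  have hmk' : (m : ℝ) + 1 ≤ k := by exact_mod_cast hmk
  have hi' : (1 : ℝ) ≤ i := by exact_mod_cast hi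
  have him' : (i : ℝ) < m := by exact_mod_cast him
  rw [gainW_eq, gainW_eq] at h ⊢
  push_cast [sub_add_eq_sub_sub] at h
  refine hW.increment_lt_of_le (s := ((k : ℝ) - m - 1) / N) (by positivity)
    (div_nonneg (by linarith) hN.le) ?_ ?_ ?_ h.le
  · exact div_lt_div_of_pos_right (by linarith) hN
  · exact div_lt_div_of_pos_right (by linarith) hN
  · rw [← add_div, div_le_one hN]
    linarith

lemma sum_gainW_le_succ_mul {W : ℝ → ℝ} (hW : InverseSShaped W) {N k n : ℕ} (hkN : k ≤ N)
    (hn : 1 ≤ n) (hnk : n + 2 ≤ k)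
    (h : ∑ i ∈ Icc 1 n, gainW W N k i ≤ (n : ℝ) * gainW W N k (n + 1)) :
    ∑ i ∈ Icc 1 (n + 1), gainW W N k i ≤ ((n + 1 : ℕ) : ℝ) * gainW W N k (n + 1 + 1) := by
  have hstep : gainW W N k (n + 1) ≤ gainW W N k (n + 2) := by
    by_contra! hdrop
    have hlt : ∀ i ∈ Icc 1 n, gainW W N k (n + 1) < gainW W N k i := fun i hi =>
      gainW_lt_of_gainW_succ_lt hW hkN (mem_Icc.mp hi).1
        (Nat.lt_succ_of_le (mem_Icc.mp hi).2) (by omega) hdrop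
    have hsum := sum_lt_sum_of_nonempty (nonempty_Icc.mpr hn) hlt
    rw [sum_const, Nat.card_Icc, Nat.add_sub_cancel, nsmul_eq_mul] at hsum
    linarith
  rw [sum_Icc_succ_top (by omega), Nat.cast_succ]
  calc ∑ i ∈ Icc 1 n, gainW W N k i + gainW W N k (n + 1)
      ≤ ((n : ℝ) + 1) * gainW W N k (n + 1) := by linarith
    _ ≤ ((n : ℝ) + 1) * gainW W N k (n + 2) := by gcongr

lemma transIdx_mem (W : ℝ → ℝ) (N : ℕ) {k : ℕ} (hk : 1 ≤ k) :
    1 ≤ transIdx W N k ∧ transIdx W N k ≤ k ∧ (transIdx W N k = k ∨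
      ∑ i ∈ Icc 1 (transIdx W N k), gainW W N k i ≤
        (transIdx W N k : ℝ) * gainW W N k (transIdx W N k + 1)) :=
  Nat.sInf_mem (s := {j : ℕ | 1 ≤ j ∧ j ≤ k ∧
    (j = k ∨ ∑ i ∈ Icc 1 j, gainW W N k i ≤ (j : ℝ) * gainW W N k (j + 1))})
    ⟨k, hk, le_rfl, Or.inl rfl⟩

theorem exceed_average_general (W : ℝ → ℝ) (N k : ℕ)
    (hW : IsPWF W) (hkN : k ≤ N) :
    ∀ j : ℕ, transIdx W N k ≤ j → j ≤ k - 1 →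
      ∑ j' ∈ Finset.Icc 1 j, gainW W N k j' ≤ (j : ℝ) * gainW W N k (j + 1) := by
  intro j hJj hjk
  rcases j.eq_zero_or_pos with rfl | hj
  · simp
  obtain ⟨hJ₁, -, hJk | hJ⟩ := transIdx_mem W N (k := k) (by omega)
  · omega
  induction j, hJj using Nat.le_induction with
  | base => exact hJ
  | succ n hJn ih =>
    exact sum_gainW_le_succ_mul hW.1 hkN (by omega) (by omega) (ih (by omega) (by omega))

/-- if `k ≥ 2` and `J(k) ≤ k−1`, then for every `J(k) ≤ j ≤ k−1`
one has `j·h⁺_{j+1,k} ≥ ∑_{j'≤j} h⁺_{j',k}`. -/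
theorem exceed_average (W : ℝ → ℝ) (N k : ℕ)
    (hW : IsPWF W) (hkN : k ≤ N) (hk2 : 2 ≤ k) (hJ : transIdx W N k ≤ k - 1) :
    ∀ j : ℕ, transIdx W N k ≤ j → j ≤ k - 1 →
      ∑ j' ∈ Finset.Icc 1 j, gainW W N k j' ≤ (j : ℝ) * gainW W N k (j + 1) :=
  exceed_average_general W N k hW hkN
end

section
/- Fix N ∈ ℕ, α, β ∈ (0,1), λ > 0 and probability weighting functions W⁺, W⁻, and consider the lottery problems P(n⁻,n⁺) with optimal values Π(n⁻,n⁺). Suppose the pair (N⁻, N⁺) of nonnegative integers with N⁻ + N⁺ = N attains the maximum of Π(n⁻,n⁺) over all nonnegative integer pairs with n⁻ + n⁺ = N, and suppose Π* = Π(N⁻, N⁺) > 0. Then every (w⁻, w⁺) that is a global maximizer of P(N⁻, N⁺) satisfies w⁻_i ≠ 0 for every i ∈ {1,…,N⁻} and w⁺_j ≠ 0 for every j ∈ {1,…,N⁺}. -/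
open Finset

/-- Loss decision weights: `h⁻_i = W⁻(i/N) − W⁻((i−1)/N)` for `i = 1,…,n⁻`. -/
noncomputable def lossW (W : ℝ → ℝ) (N i : ℕ) : ℝ :=
  W ((i : ℝ) / N) - W (((i : ℝ) - 1) / N)

/-- Feasibility for the loss subproblem: `y_1 ≥ y_2 ≥ … ≥ y_n ≥ 0` and `∑ h⁻_i y_i = v`. -/
def LossFeasible (W : ℝ → ℝ) (N n : ℕ) (v : ℝ) (y : ℕ → ℝ) : Prop :=
  0 ≤ y n ∧ (∀ i ∈ Finset.Icc 1 (n - 1), y (i + 1) ≤ y i) ∧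
  ∑ i ∈ Finset.Icc 1 n, lossW W N i * y i = v

/-- The CPT value function: `U(w) = w^α` for `w ≥ 0` and `U(w) = −λ·(−w)^β` for `w < 0`. -/
noncomputable def cptU (α β lam : ℝ) (w : ℝ) : ℝ :=
  if 0 ≤ w then w ^ α else -lam * (-w) ^ β

/-- Feasibility for the lottery problem `P(n⁻,n⁺)`: nonnegative CPT expected utility
(individual rationality), `0 ≤ w⁺_1 ≤ … ≤ w⁺_{n⁺}`, and `w⁻_1 ≤ … ≤ w⁻_{n⁻} ≤ 0`. -/
def LotFeasible (Wm Wp : ℝ → ℝ) (N : ℕ) (α β lam : ℝ) (nm np : ℕ)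
    (wm wp : ℕ → ℝ) : Prop :=
  0 ≤ ∑ i ∈ Finset.Icc 1 nm, lossW Wm N i * cptU α β lam (wm i) +
      ∑ j ∈ Finset.Icc 1 np, gainW Wp N np j * cptU α β lam (wp j) ∧
  (1 ≤ np → 0 ≤ wp 1) ∧ (∀ j ∈ Finset.Icc 1 (np - 1), wp j ≤ wp (j + 1)) ∧
  (1 ≤ nm → wm nm ≤ 0) ∧ (∀ i ∈ Finset.Icc 1 (nm - 1), wm i ≤ wm (i + 1))

/-- The seller's profit: `∑_i (−w⁻_i) − ∑_j w⁺_j`. -/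
def LotObj (nm np : ℕ) (wm wp : ℕ → ℝ) : ℝ :=
  ∑ i ∈ Finset.Icc 1 nm, (-(wm i)) - ∑ j ∈ Finset.Icc 1 np, wp j

/- ### Auxiliary lemmas -/

lemma pwf_gap_pos {W : ℝ → ℝ} (hW : IsPWF W) {a b : ℝ} (ha : 0 ≤ a) (hab : a < b)
    (hb : b ≤ 1) : 0 < W b - W a :=
  sub_pos.2 (hW.1.1 ⟨ha, le_trans hab.le hb⟩ ⟨le_trans ha hab.le, hb⟩ hab)

lemma lossW_pos {W : ℝ → ℝ} (hW : IsPWF W) {N i : ℕ} (h1 : 1 ≤ i) (h2 : i ≤ N) :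
    0 < lossW W N i := by
  have hN : (0:ℝ) < N := by
    have : 1 ≤ N := le_trans h1 h2
    exact_mod_cast Nat.pos_of_ne_zero (by omega)
  have hi1 : (1:ℝ) ≤ (i:ℝ) := by exact_mod_cast h1
  have hiN : (i:ℝ) ≤ N := by exact_mod_cast h2
  apply pwf_gap_pos hW
  · apply div_nonneg (by linarith) hN.le
  · apply div_lt_div_of_pos_right (by linarith) hN
  · exact div_le_one_of_le₀ hiN hN.le

lemma gainW_pos_s12 {W : ℝ → ℝ} (hW : IsPWF W) {N n j : ℕ} (h1 : 1 ≤ j) (h2 : j ≤ n)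
    (h3 : n ≤ N) : 0 < gainW W N n j := by
  have hN : (0:ℝ) < N := by
    have : 1 ≤ N := le_trans h1 (le_trans h2 h3)
    exact_mod_cast Nat.pos_of_ne_zero (by omega)
  have hj1 : (1:ℝ) ≤ (j:ℝ) := by exact_mod_cast h1
  have hjn : (j:ℝ) ≤ n := by exact_mod_cast h2
  have hnN : (n:ℝ) ≤ N := by exact_mod_cast h3
  apply pwf_gap_pos hW
  · apply div_nonneg (by linarith) hN.le
  · apply div_lt_div_of_pos_right (by linarith) hN
  · apply div_le_one_of_le₀ (by linarith) hN.le

lemma rpow_lin {x t p : ℝ} (hx : 0 < x) (ht : 0 ≤ t) (hp : p ≤ 1) :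
    (x + t) ^ p ≤ x ^ p + x ^ (p - 1) * t := by
  have h1 : x + t = x * (1 + t / x) := by field_simp
  have h2 : (0:ℝ) ≤ 1 + t / x := by positivity
  rw [h1, Real.mul_rpow hx.le h2]
  have h3 : (1 + t / x) ^ p ≤ (1 + t / x) ^ (1:ℝ) := by
    apply Real.rpow_le_rpow_of_exponent_le _ hp
    have : 0 ≤ t / x := by positivity
    linarith
  rw [Real.rpow_one] at h3
  have h4 : x ^ p * (1 + t / x) ^ p ≤ x ^ p * (1 + t / x) :=
    mul_le_mul_of_nonneg_left h3 (Real.rpow_nonneg hx.le p)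
  have h5 : x ^ p * (1 + t / x) = x ^ p + x ^ (p - 1) * t := by
    rw [Real.rpow_sub hx, Real.rpow_one]
    field_simp
  linarith [h4, h5.ge]

lemma chain_mono {f : ℕ → ℝ} {n : ℕ} (h : ∀ i ∈ Finset.Icc 1 (n-1), f i ≤ f (i+1)) :
    ∀ a b, 1 ≤ a → a ≤ b → b ≤ n → f a ≤ f b := by
  intro a b ha hab hbn
  induction b with
  | zero => omega
  | succ b ih =>
    rcases Nat.eq_or_lt_of_le hab with rfl | hlt
    · exact le_refl _
    · exact le_trans (ih (by omega) (by omega)) (h b (Finset.mem_Icc.2 (by omega)))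

lemma sum_update_term {s : Finset ℕ} {k : ℕ} (hk : k ∈ s) (F G : ℕ → ℝ)
    (hFG : ∀ j ∈ s, j ≠ k → G j = F j) :
    ∑ j ∈ s, G j = ∑ j ∈ s, F j + (G k - F k) := by
  rw [← Finset.add_sum_erase s G hk, ← Finset.add_sum_erase s F hk]
  have : ∑ j ∈ s.erase k, G j = ∑ j ∈ s.erase k, F j := by
    apply Finset.sum_congr rfl
    intro j hj
    exact hFG j (Finset.mem_of_mem_erase hj) (Finset.ne_of_mem_erase hj)
  rw [this]; ring

lemma sum_shift (n : ℕ) (f : ℕ → ℝ) :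
    ∑ j ∈ Finset.Icc 2 (n+1), f j = ∑ j ∈ Finset.Icc 1 n, f (j+1) := by
  have : Finset.Icc 2 (n+1) = (Finset.Icc 1 n).map (addRightEmbedding 1) := by
    rw [Finset.map_add_right_Icc]
  rw [this, Finset.sum_map]
  rfl

lemma sum_Icc_split_bot (n : ℕ) (f : ℕ → ℝ) :
    ∑ j ∈ Finset.Icc 1 (n+1), f j = f 1 + ∑ j ∈ Finset.Icc 2 (n+1), f j := by
  have h : Finset.Icc 1 (n+1) = insert 1 (Finset.Icc 2 (n+1)) := by
    ext a; simp only [Finset.mem_Icc, Finset.mem_insert]; omega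
  rw [h, Finset.sum_insert (by simp)]

lemma sum_Icc_split_top {n : ℕ} (hn : 1 ≤ n) (f : ℕ → ℝ) :
    ∑ j ∈ Finset.Icc 1 n, f j = ∑ j ∈ Finset.Icc 1 (n-1), f j + f n := by
  have he : (Finset.Icc 1 n).erase n = Finset.Icc 1 (n-1) := by
    ext a; simp only [Finset.mem_erase, Finset.mem_Icc]; omega
  rw [← Finset.add_sum_erase _ f (Finset.mem_Icc.2 ⟨hn, le_rfl⟩), he]; ring

lemma gainW_shift (W : ℝ → ℝ) (N n j : ℕ) : gainW W N (n+1) (j+1) = gainW W N n j := by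
  unfold gainW
  push_cast
  ring_nf

lemma cptU_zero {α β lam : ℝ} (hα : α ≠ 0) : cptU α β lam 0 = 0 := by
  simp [cptU, Real.zero_rpow hα]

lemma cptU_nonneg {α β lam w : ℝ} (hw : 0 ≤ w) : cptU α β lam w = w ^ α := if_pos hw

lemma cptU_neg {α β lam w : ℝ} (hw : w < 0) : cptU α β lam w = -lam * (-w) ^ β :=
  if_neg (not_le.2 hw)

lemma eps_exists {h c B α : ℝ} (hh : 0 < h) (hc : 0 < c) (hB : 0 < B)
    (hα0 : 0 < α) (hα1 : α < 1) :
    ∃ ε : ℝ, 0 < ε ∧ ε ≤ B ∧ 2 * ε ≤ h / c * ε ^ α := by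
  set E := (h / (2 * c)) ^ (1 - α)⁻¹ with hE
  have hE0 : 0 < E := Real.rpow_pos_of_pos (by positivity) _
  refine ⟨min B E, by positivity, min_le_left _ _, ?_⟩
  set ε := min B E with hεdef
  have hε0 : 0 < ε := by positivity
  have h1 : ε ^ (1 - α) ≤ h / (2 * c) := by
    calc ε ^ (1-α) ≤ E ^ (1-α) :=
          Real.rpow_le_rpow hε0.le (min_le_right _ _) (by linarith)
    _ = h / (2*c) := Real.rpow_inv_rpow (by positivity) (by intro hcon; linarith [sub_eq_zero.1 hcon])
  have h2 : ε ^ (1 - α) * ε ^ α = ε := by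
    rw [← Real.rpow_add hε0]
    norm_num
  have h3 : 0 < ε ^ α := Real.rpow_pos_of_pos hε0 _
  have h4 : 2 * (ε ^ (1-α) * ε ^ α) ≤ 2 * ((h/(2*c)) * ε ^ α) := by nlinarith
  have h5 : 2 * ((h/(2*c)) * ε ^ α) = h / c * ε ^ α := by
    field_simp
  linarith [h2 ▸ h4]


set_option maxHeartbeats 2000000 in
/-- if `(N⁻,N⁺)` attains the maximum profit `Π* > 0` among all splits
`n⁻ + n⁺ = N`, then every global maximizer of `P(N⁻,N⁺)` has no zero component. -/
theorem optimal_lottery_no_zero_components (Wm Wp : ℝ → ℝ) (N : ℕ) (α β lam : ℝ)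
    (Nm Np : ℕ) (Pistar : ℝ)
    (hWm : IsPWF Wm) (hWp : IsPWF Wp)
    (hα0 : 0 < α) (hα1 : α < 1) (hβ0 : 0 < β) (hβ1 : β < 1) (hlam : 0 < lam)
    (hsum : Nm + Np = N)
    (hopt : IsGreatest {S : ℝ | ∃ wm wp : ℕ → ℝ,
        LotFeasible Wm Wp N α β lam Nm Np wm wp ∧ S = LotObj Nm Np wm wp} Pistar)
    (hmax : ∀ nm np : ℕ, nm + np = N → ∀ wm wp : ℕ → ℝ,
        LotFeasible Wm Wp N α β lam nm np wm wp → LotObj nm np wm wp ≤ Pistar)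
    (hpos : 0 < Pistar) :
    ∀ wm wp : ℕ → ℝ, LotFeasible Wm Wp N α β lam Nm Np wm wp →
      LotObj Nm Np wm wp = Pistar →
      (∀ i ∈ Finset.Icc 1 Nm, wm i ≠ 0) ∧ (∀ j ∈ Finset.Icc 1 Np, wp j ≠ 0) := by
  intro wm wp hfeas hobj
  obtain ⟨hUt, hwp1, hwpM, hwmL, hwmM⟩ := hfeas
  have hwpc : ∀ a b, 1 ≤ a → a ≤ b → b ≤ Np → wp a ≤ wp b := chain_mono hwpM
  have hwmc : ∀ a b, 1 ≤ a → a ≤ b → b ≤ Nm → wm a ≤ wm b := chain_mono hwmM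
  have hwpnn : ∀ j, 1 ≤ j → j ≤ Np → 0 ≤ wp j := fun j h1 h2 =>
    le_trans (hwp1 (le_trans h1 h2)) (hwpc 1 j le_rfl h1 h2)
  have hwmnp : ∀ i, 1 ≤ i → i ≤ Nm → wm i ≤ 0 := fun i h1 h2 =>
    le_trans (hwmc i Nm h1 h2 le_rfl) (hwmL (le_trans h1 h2))
  rw [LotObj] at hobj
  -- there is a strictly negative loss component
  have hsum_wp_nonneg : 0 ≤ ∑ j ∈ Finset.Icc 1 Np, wp j :=
    Finset.sum_nonneg fun j hj =>
      hwpnn j (Finset.mem_Icc.1 hj).1 (Finset.mem_Icc.1 hj).2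
  have hexneg : ∃ i ∈ Finset.Icc 1 Nm, 0 < -(wm i) := by
    by_contra hcon
    push_neg at hcon
    have : ∑ i ∈ Finset.Icc 1 Nm, (-(wm i)) ≤ 0 := Finset.sum_nonpos hcon
    linarith
  obtain ⟨i0, hi0mem, hi0⟩ := hexneg
  obtain ⟨hi0a, hi0b⟩ := Finset.mem_Icc.1 hi0mem
  have hNm1 : 1 ≤ Nm := le_trans hi0a hi0b
  have hwm1 : wm 1 < 0 := lt_of_le_of_lt (hwmc 1 i0 le_rfl hi0a hi0b) (by linarith)
  set x := -(wm 1) with hxdef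
  have hx0 : 0 < x := by simp only [hxdef]; linarith
  have hN1 : 1 ≤ N := by omega
  have hl1 : 0 < lossW Wm N 1 := lossW_pos hWm le_rfl hN1
  have hUwm1 : cptU α β lam (wm 1) = -lam * x ^ β := cptU_neg hwm1
  -- the loss part of the utility is negative, so the gain part is positive
  have hLneg : ∑ i ∈ Finset.Icc 1 Nm, lossW Wm N i * cptU α β lam (wm i) < 0 := by
    have key := Finset.add_sum_erase (Finset.Icc 1 Nm)
      (fun i => lossW Wm N i * cptU α β lam (wm i)) (Finset.mem_Icc.2 ⟨le_rfl, hNm1⟩)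
    have t1 : lossW Wm N 1 * cptU α β lam (wm 1) < 0 := by
      rw [hUwm1]
      have : 0 < x ^ β := Real.rpow_pos_of_pos hx0 β
      nlinarith [mul_pos hl1 (mul_pos hlam this)]
    have t2 : ∑ i ∈ (Finset.Icc 1 Nm).erase 1,
        lossW Wm N i * cptU α β lam (wm i) ≤ 0 := by
      apply Finset.sum_nonpos
      intro i hi
      obtain ⟨h1, h2⟩ := Finset.mem_Icc.1 (Finset.mem_of_mem_erase hi)
      have hwmi := hwmnp i h1 h2
      have hli : 0 < lossW Wm N i := lossW_pos hWm h1 (by omega)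
      rcases lt_or_eq_of_le hwmi with hlt | heq
      · rw [cptU_neg hlt]
        have : 0 < (-(wm i)) ^ β := Real.rpow_pos_of_pos (by linarith) β
        nlinarith [mul_pos hli (mul_pos hlam this)]
      · rw [heq, cptU_zero (ne_of_gt hα0)]; simp
    rw [← key]
    beta_reduce
    linarith
  have hGpos : 0 < ∑ j ∈ Finset.Icc 1 Np, gainW Wp N Np j * cptU α β lam (wp j) := by
    linarith
  have hexpos : ∃ j, 1 ≤ j ∧ j ≤ Np ∧ 0 < wp j := by
    by_contra hcon
    push_neg at hcon
    have : ∑ j ∈ Finset.Icc 1 Np, gainW Wp N Np j * cptU α β lam (wp j) ≤ 0 := by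
      apply Finset.sum_nonpos
      intro j hj
      obtain ⟨h1, h2⟩ := Finset.mem_Icc.1 hj
      have h0 : wp j = 0 := le_antisymm (hcon j h1 h2) (hwpnn j h1 h2)
      rw [h0, cptU_zero (ne_of_gt hα0)]; simp
    linarith
  obtain ⟨j0, hj0a, hj0b, hj0⟩ := hexpos
  have hNp1 : 1 ≤ Np := le_trans hj0a hj0b
  set c := lam * lossW Wm N 1 * x ^ (β - 1) with hcdef
  have hc0 : 0 < c := mul_pos (mul_pos hlam hl1) (Real.rpow_pos_of_pos hx0 _)
  -- generic computation: updating `wm` at index 1 to `wm 1 - δ` costs at most `c * δ` utility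
  have loss_update : ∀ (s : Finset ℕ) (δ : ℝ), 0 ≤ δ → 1 ∈ s →
      ∑ i ∈ s, lossW Wm N i * cptU α β lam (Function.update wm 1 (wm 1 - δ) i) ≥
      ∑ i ∈ s, lossW Wm N i * cptU α β lam (wm i) - c * δ := by
    intro s δ hδ h1s
    rw [sum_update_term h1s (fun i => lossW Wm N i * cptU α β lam (wm i))
      (fun i => lossW Wm N i * cptU α β lam (Function.update wm 1 (wm 1 - δ) i))
      (fun j _ hj => by beta_reduce; rw [Function.update_of_ne hj])]
    beta_reduce
    have hU1 : cptU α β lam (Function.update wm 1 (wm 1 - δ) 1) = -lam * (x + δ) ^ β := by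
      rw [Function.update_self, cptU_neg (by linarith)]
      congr 1
      simp only [hxdef]
      ring
    rw [hU1, hUwm1]
    have hlin : (x + δ) ^ β ≤ x ^ β + x ^ (β - 1) * δ := rpow_lin hx0 hδ hβ1.le
    have : lossW Wm N 1 * (-lam * (x + δ) ^ β - -lam * x ^ β) ≥ -(c * δ) := by
      rw [hcdef]
      nlinarith [mul_le_mul_of_nonneg_left hlin (le_of_lt (mul_pos hlam hl1))]
    linarith
  -- generic computation: the corresponding change of the loss part of the objective
  have loss_obj_update : ∀ (s : Finset ℕ) (δ : ℝ), 1 ∈ s →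
      ∑ i ∈ s, (-(Function.update wm 1 (wm 1 - δ) i)) = ∑ i ∈ s, (-(wm i)) + δ := by
    intro s δ h1s
    rw [sum_update_term h1s (fun i => -(wm i))
      (fun i => -(Function.update wm 1 (wm 1 - δ) i))
      (fun j _ hj => by beta_reduce; rw [Function.update_of_ne hj])]
    beta_reduce
    rw [Function.update_self]
    ring
  -- Part 1: no gain component is zero
  have hgain : ∀ j ∈ Finset.Icc 1 Np, wp j ≠ 0 := by
    intro j hjmem hjz
    obtain ⟨hja, hjb⟩ := Finset.mem_Icc.1 hjmem
    have hwp1z : wp 1 = 0 := le_antisymm (hjz ▸ hwpc 1 j le_rfl hja hjb) (hwp1 hNp1)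
    have hj02 : 2 ≤ j0 := by
      rcases Nat.lt_or_ge j0 2 with h | h
      · interval_cases j0 <;> simp_all <;> linarith
      · exact h
    have hSne : ∃ n, n ∈ {n | 2 ≤ n ∧ 0 < wp n} := ⟨j0, hj02, hj0⟩
    set m := sInf {n | 2 ≤ n ∧ 0 < wp n} with hmdef
    obtain ⟨hm2, hmpos⟩ : 2 ≤ m ∧ 0 < wp m := Nat.sInf_mem hSne
    have hmNp : m ≤ Np := le_trans (Nat.sInf_le ⟨hj02, hj0⟩) hj0b
    set k := m - 1 with hkdef
    have hk1 : 1 ≤ k := by omega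
    have hkNp : k ≤ Np - 1 := by omega
    have hwpk : wp k = 0 := by
      have hknpos : ¬ 0 < wp k := by
        rcases Nat.eq_or_lt_of_le hk1 with h1 | h2
        · rw [← h1, hwp1z]; simp
        · intro hpos
          exact Nat.notMem_of_lt_sInf (show k < m by omega) ⟨by omega, hpos⟩
      exact le_antisymm (not_lt.1 hknpos) (hwpnn k hk1 (by omega))
    set h := gainW Wp N Np k with hhdef
    have hh0 : 0 < h := gainW_pos_s12 hWp hk1 (by omega) (by omega)
    obtain ⟨ε, hε0, hεB, hεkey⟩ := eps_exists hh0 hc0 hmpos hα0 hα1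
    set δ := h * ε ^ α / c with hδdef
    have hδ0 : 0 < δ := by positivity
    have hδc : c * δ = h * ε ^ α := by
      rw [hδdef]; field_simp
    have hδε : ε < δ := by
      have : h / c * ε ^ α = δ := by rw [hδdef]; ring
      linarith [hεkey, this]
    set wm' := Function.update wm 1 (wm 1 - δ) with hwm'def
    set wp' := Function.update wp k ε with hwp'def
    have hkm : k + 1 = m := by omega
    -- feasibility of the perturbed point
    have hfeas' : LotFeasible Wm Wp N α β lam Nm Np wm' wp' := by
      refine ⟨?_, ?_, ?_, ?_, ?_⟩
      · -- utility constraint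
        have hG' : ∑ j' ∈ Finset.Icc 1 Np, gainW Wp N Np j' * cptU α β lam (wp' j') =
            ∑ j' ∈ Finset.Icc 1 Np, gainW Wp N Np j' * cptU α β lam (wp j') + h * ε ^ α := by
          rw [sum_update_term (Finset.mem_Icc.2 ⟨hk1, by omega⟩)
            (fun j' => gainW Wp N Np j' * cptU α β lam (wp j'))
            (fun j' => gainW Wp N Np j' * cptU α β lam (wp' j'))
            (fun j' _ hj' => by beta_reduce; rw [hwp'def, Function.update_of_ne hj'])]
          beta_reduce
          rw [hwp'def, Function.update_self, hwpk, cptU_zero (ne_of_gt hα0),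
            cptU_nonneg hε0.le]
          ring
        have hL' := loss_update (Finset.Icc 1 Nm) δ hδ0.le (Finset.mem_Icc.2 ⟨le_rfl, hNm1⟩)
        rw [hG']
        rw [← hwm'def] at hL'
        linarith
      · intro _
        rcases Nat.eq_or_lt_of_le hk1 with h1 | h2
        · rw [hwp'def, ← h1, Function.update_self]; exact hε0.le
        · rw [hwp'def, Function.update_of_ne (by omega)]
          exact hwp1 hNp1
      · intro j' hj'
        obtain ⟨hj'a, hj'b⟩ := Finset.mem_Icc.1 hj'
        rcases eq_or_ne j' k with rfl | hne1
        · rw [hwp'def, Function.update_self, Function.update_of_ne (by omega), hkm]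
          exact hεB
        · rcases eq_or_ne (j' + 1) k with hk' | hne2
          · rw [hwp'def, Function.update_of_ne hne1, hk', Function.update_self]
            have := hwpM j' (Finset.mem_Icc.2 ⟨hj'a, hj'b⟩)
            rw [hk', hwpk] at this
            linarith
          · rw [hwp'def, Function.update_of_ne hne1, Function.update_of_ne hne2]
            exact hwpM j' hj'
      · intro _
        rcases eq_or_ne Nm 1 with h1 | h2
        · rw [hwm'def, h1, Function.update_self]
          linarith
        · rw [hwm'def, Function.update_of_ne (by omega)]
          exact hwmL hNm1
      · intro i hi
        obtain ⟨hia, hib⟩ := Finset.mem_Icc.1 hi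
        rcases eq_or_ne i 1 with rfl | hne
        · rw [hwm'def, Function.update_self, Function.update_of_ne (by omega)]
          have := hwmM 1 hi
          linarith
        · rw [hwm'def, Function.update_of_ne hne, Function.update_of_ne (by omega)]
          exact hwmM i hi
    -- the perturbed point has strictly larger objective value: contradiction
    have hobj' : LotObj Nm Np wm' wp' = Pistar + (δ - ε) := by
      rw [LotObj]
      rw [loss_obj_update (Finset.Icc 1 Nm) δ (Finset.mem_Icc.2 ⟨le_rfl, hNm1⟩)]
      rw [sum_update_term (Finset.mem_Icc.2 ⟨hk1, by omega⟩) wp wp'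
        (fun j' _ hj' => by rw [hwp'def, Function.update_of_ne hj'])]
      rw [hwp'def, Function.update_self, hwpk]
      linarith
    have hle : LotObj Nm Np wm' wp' ≤ Pistar := hopt.2 ⟨wm', wp', hfeas', rfl⟩
    rw [hobj'] at hle
    linarith
  refine ⟨?_, hgain⟩
  -- Part 2: no loss component is zero
  intro i1 hi1mem hi1z
  obtain ⟨hi1a, hi1b⟩ := Finset.mem_Icc.1 hi1mem
  have hwmNm : wm Nm = 0 :=
    le_antisymm (hwmL hNm1) (hi1z ▸ hwmc i1 Nm hi1a hi1b le_rfl)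
  have hNm2 : 2 ≤ Nm := by
    rcases Nat.eq_or_lt_of_le hNm1 with h1 | h2
    · rw [← h1] at hwmNm; linarith
    · omega
  have hwp1pos : 0 < wp 1 :=
    lt_of_le_of_ne (hwp1 hNp1) (Ne.symm (hgain 1 (Finset.mem_Icc.2 ⟨le_rfl, hNp1⟩)))
  set h := gainW Wp N (Np + 1) 1 with hhdef
  have hh0 : 0 < h := gainW_pos_s12 hWp le_rfl (by omega) (by omega)
  obtain ⟨ε, hε0, hεB, hεkey⟩ := eps_exists hh0 hc0 hwp1pos hα0 hα1
  set δ := h * ε ^ α / c with hδdef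
  have hδ0 : 0 < δ := by positivity
  have hδc : c * δ = h * ε ^ α := by
    rw [hδdef]; field_simp
  have hδε : ε < δ := by
    have : h / c * ε ^ α = δ := by rw [hδdef]; ring
    linarith [hεkey, this]
  set wm' := Function.update wm 1 (wm 1 - δ) with hwm'def
  set wp'' : ℕ → ℝ := fun j => if j ≤ 1 then ε else wp (j - 1) with hwp''def
  -- the shifted gain sums
  have hGshift : ∑ j ∈ Finset.Icc 2 (Np + 1),
      gainW Wp N (Np + 1) j * cptU α β lam (wp'' j) =
      ∑ j ∈ Finset.Icc 1 Np, gainW Wp N Np j * cptU α β lam (wp j) := by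
    rw [sum_shift Np (fun j => gainW Wp N (Np + 1) j * cptU α β lam (wp'' j))]
    apply Finset.sum_congr rfl
    intro j hj
    obtain ⟨h1, h2⟩ := Finset.mem_Icc.1 hj
    have e1 : wp'' (j + 1) = wp j := by
      rw [hwp''def]
      simp only []
      rw [if_neg (by omega)]
      congr 1
    rw [e1, gainW_shift]
  have hGshift2 : ∑ j ∈ Finset.Icc 2 (Np + 1), wp'' j = ∑ j ∈ Finset.Icc 1 Np, wp j := by
    rw [sum_shift Np wp'']
    apply Finset.sum_congr rfl
    intro j hj
    obtain ⟨h1, h2⟩ := Finset.mem_Icc.1 hj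
    rw [hwp''def]
    simp only []
    rw [if_neg (by omega)]
    congr 1
  have hwp''1 : wp'' 1 = ε := by rw [hwp''def]; norm_num
  -- feasibility for the split (Nm − 1, Np + 1)
  have hfeas' : LotFeasible Wm Wp N α β lam (Nm - 1) (Np + 1) wm' wp'' := by
    refine ⟨?_, ?_, ?_, ?_, ?_⟩
    · -- utility constraint
      have hLtop : ∑ i ∈ Finset.Icc 1 Nm, lossW Wm N i * cptU α β lam (wm i) =
          ∑ i ∈ Finset.Icc 1 (Nm - 1), lossW Wm N i * cptU α β lam (wm i) := by
        rw [sum_Icc_split_top hNm1 (fun i => lossW Wm N i * cptU α β lam (wm i)),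
          hwmNm, cptU_zero (ne_of_gt hα0)]
        ring
      have hL' := loss_update (Finset.Icc 1 (Nm - 1)) δ hδ0.le
        (Finset.mem_Icc.2 ⟨le_rfl, by omega⟩)
      rw [← hwm'def] at hL'
      have hG' : ∑ j ∈ Finset.Icc 1 (Np + 1),
          gainW Wp N (Np + 1) j * cptU α β lam (wp'' j) =
          h * ε ^ α + ∑ j ∈ Finset.Icc 1 Np, gainW Wp N Np j * cptU α β lam (wp j) := by
        rw [sum_Icc_split_bot Np (fun j => gainW Wp N (Np + 1) j * cptU α β lam (wp'' j)),
          hGshift, hwp''1, cptU_nonneg hε0.le, ← hhdef]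
      rw [hG']
      rw [hLtop] at hUt
      linarith
    · intro _
      rw [hwp''1]; exact hε0.le
    · intro j hj
      obtain ⟨hja, hjb⟩ := Finset.mem_Icc.1 hj
      have hjb' : j ≤ Np := by omega
      rcases Nat.eq_or_lt_of_le hja with h1 | h2
      · rw [← h1, hwp''1, hwp''def]
        simp only []
        rw [if_neg (by omega)]
        norm_num
        linarith
      · rw [hwp''def]
        simp only []
        rw [if_neg (by omega), if_neg (by omega)]
        have := hwpM (j - 1) (Finset.mem_Icc.2 ⟨by omega, by omega⟩)
        have e : j - 1 + 1 = j := by omega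
        rw [e] at this
        have e2 : j + 1 - 1 = j := by omega
        rw [e2]
        exact this
    · intro hNm1'
      rcases eq_or_ne (Nm - 1) 1 with h1 | h2
      · rw [hwm'def, h1, Function.update_self]
        linarith
      · rw [hwm'def, Function.update_of_ne (Ne.symm (Ne.symm h2))]
        exact hwmnp (Nm - 1) hNm1' (by omega)
    · intro i hi
      obtain ⟨hia, hib⟩ := Finset.mem_Icc.1 hi
      have e1 : wm' 1 = wm 1 - δ := by rw [hwm'def]; simp
      have ene : ∀ m : ℕ, m ≠ 1 → wm' m = wm m := by
        intro m hm; rw [hwm'def]; exact Function.update_of_ne hm _ _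
      rcases eq_or_ne i 1 with rfl | hne
      · rw [e1, ene (1+1) (by omega)]
        have := hwmM 1 (Finset.mem_Icc.2 ⟨le_rfl, by omega⟩)
        linarith
      · rw [ene i hne, ene (i+1) (by omega)]
        exact hwmM i (Finset.mem_Icc.2 ⟨hia, by omega⟩)
  -- the objective strictly exceeds Pistar: contradiction with hmax
  have hobj' : LotObj (Nm - 1) (Np + 1) wm' wp'' = Pistar + (δ - ε) := by
    rw [LotObj]
    have hLtopo : ∑ i ∈ Finset.Icc 1 Nm, (-(wm i)) =
        ∑ i ∈ Finset.Icc 1 (Nm - 1), (-(wm i)) := by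
      rw [sum_Icc_split_top hNm1 (fun i => -(wm i)), hwmNm]
      ring
    rw [loss_obj_update (Finset.Icc 1 (Nm - 1)) δ (Finset.mem_Icc.2 ⟨le_rfl, by omega⟩)]
    rw [sum_Icc_split_bot Np wp'', hGshift2, hwp''1]
    rw [hLtopo] at hobj
    linarith
  have hle : LotObj (Nm - 1) (Np + 1) wm' wp'' ≤ Pistar :=
    hmax (Nm - 1) (Np + 1) (by omega) wm' wp'' hfeas'
  rw [hobj'] at hle
  linarith
end

section
/- Let N ∈ ℕ, 1 ≤ n⁻ ≤ N, β ∈ (0,1), λ > 0, ȳ > 0, let W⁻ be a probability weighting function, let h⁻ be the loss decision weights, and let v satisfy 0 ≤ v ≤ ȳ·∑_{i=1}^{n⁻} h⁻_i. Then the optimal value (minimum) of the price-constrained loss subproblem equals the minimum, over all pairs of integers ℓ₁, ℓ₂ with 0 ≤ ℓ₁ < ℓ₂ ≤ n⁻ satisfying ȳ·∑_{i=1}^{ℓ₁} h⁻_i ≤ v ≤ ȳ·∑_{i=1}^{ℓ₂} h⁻_i, of the quantity −ℓ₁·(ȳ/λ)^{1/β} − (ℓ₂ − ℓ₁)·( (v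 − ȳ·∑_{i=1}^{ℓ₁} h⁻_i) / (λ·∑_{i=ℓ₁+1}^{ℓ₂} h⁻_i) )^{1/β}. -/
open Finset

/-- Feasibility for the price-constrained loss subproblem:
`ȳ ≥ y_1 ≥ y_2 ≥ … ≥ y_n ≥ 0` and `∑ h⁻_i y_i = v`. -/
def PLossFeasible (W : ℝ → ℝ) (N n : ℕ) (ybar v : ℝ) (y : ℕ → ℝ) : Prop :=
  y 1 ≤ ybar ∧ 0 ≤ y n ∧ (∀ i ∈ Finset.Icc 1 (n - 1), y (i + 1) ≤ y i) ∧
  ∑ i ∈ Finset.Icc 1 n, lossW W N i * y i = v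

open Filter Topology

/-!
Write a feasible profile as `y i = ȳ * ∑_{k ≥ i} t k`, where `t k = (y k - y (k + 1)) / ȳ` with
`y 0 = ȳ` and `y (n + 1) = 0`. The constraints on `y` say exactly that `t` is a probability
vector on `{0, …, n}` whose mean with respect to the strictly increasing levels `ȳ * H k`,
`H k = ∑_{i ≤ k} h⁻ i`, equals `v`. Since `1 / β ≥ 1`, the objective `∑ (y i / λ) ^ (1 / β)` is
convex in `t`, so by Krein–Milman it is bounded by its values at extreme points. There are only two
linear constraints, so an extreme point has at most two nonzero coordinates `t ℓ₁`, `t ℓ₂`: the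
profile is `ȳ` on `[1, ℓ₁]`, constant on `(ℓ₁, ℓ₂]` and `0` beyond, and its objective value is
the formula of the statement. Conversely every admissible pair `(ℓ₁, ℓ₂)` yields such a profile.
-/

theorem ConvexOn.le_of_forall_extremePoints_le {E : Type*} [AddCommGroup E] [Module ℝ E]
    [TopologicalSpace E] [T2Space E] [IsTopologicalAddGroup E] [ContinuousSMul ℝ E]
    [LocallyConvexSpace ℝ E] {s : Set E} {f : E → ℝ} {B : ℝ} (hs : IsCompact s)
    (hf : ConvexOn ℝ s f) (hfc : ContinuousOn f s) (hB : ∀ e ∈ s.extremePoints ℝ, f e ≤ B)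
    {x : E} (hx : x ∈ s) : f x ≤ B := by
  have hclosed : IsClosed (s ∩ f ⁻¹' Set.Iic B) :=
    hfc.preimage_isClosed_of_isClosed hs.isClosed isClosed_Iic
  have hhull : convexHull ℝ (s.extremePoints ℝ) ⊆ s ∩ f ⁻¹' Set.Iic B := fun z hz => by
    obtain ⟨e, he, hfe⟩ := hf.exists_ge_of_mem_convexHull extremePoints_subset hz
    exact ⟨convexHull_min extremePoints_subset hf.1 hz, hfe.trans (hB e he)⟩
  rw [← closure_convexHull_extremePoints hs hf.1] at hx
  exact (closure_minimal hhull hclosed hx).2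

section MeanSimplex

variable {ι : Type*} [Fintype ι]

def meanSimplex (c : ι → ℝ) (v : ℝ) : Set (ι → ℝ) :=
  stdSimplex ℝ ι ∩ {t | ∑ i, t i * c i = v}

theorem mem_meanSimplex {c : ι → ℝ} {v : ℝ} {t : ι → ℝ} :
    t ∈ meanSimplex c v ↔ (∀ i, 0 ≤ t i) ∧ ∑ i, t i = 1 ∧ ∑ i, t i * c i = v :=
  and_assoc

theorem convex_meanSimplex (c : ι → ℝ) (v : ℝ) : Convex ℝ (meanSimplex c v) :=
  (convex_stdSimplex ℝ ι).inter <| convex_hyperplane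
    ⟨fun s t => by simp [add_mul, sum_add_distrib], fun a t => by simp [mul_assoc, mul_sum]⟩ v

theorem isCompact_meanSimplex (c : ι → ℝ) (v : ℝ) : IsCompact (meanSimplex c v) :=
  (isCompact_stdSimplex ℝ ι).inter_right (isClosed_eq (by fun_prop) continuous_const)

theorem exists_add_smul_mem_meanSimplex {c : ι → ℝ} {v : ℝ} {t d : ι → ℝ}
    (ht : t ∈ meanSimplex c v) (hd : ∑ i, d i = 0) (hdc : ∑ i, d i * c i = 0)
    (hsupp : ∀ i, t i = 0 → d i = 0) :
    ∃ ε : ℝ, 0 < ε ∧ t + ε • d ∈ meanSimplex c v ∧ t - ε • d ∈ meanSimplex c v := by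
  obtain ⟨ht0, ht1, htc⟩ := mem_meanSimplex.1 ht
  have hnear : ∀ᶠ σ in 𝓝 (0 : ℝ), t + σ • d ∈ meanSimplex c v := by
    have hnonneg : ∀ᶠ σ in 𝓝 (0 : ℝ), ∀ i, 0 ≤ t i + σ * d i := by
      refine eventually_all.2 fun i => ?_
      rcases (ht0 i).eq_or_lt with h | h
      · simp [← h, hsupp i h.symm]
      · have : Tendsto (fun σ => t i + σ * d i) (𝓝 0) (𝓝 (t i)) :=
          Continuous.tendsto' (by fun_prop) _ _ (by simp)
        exact (this.eventually (lt_mem_nhds h)).mono fun _ => le_of_lt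
    filter_upwards [hnonneg] with σ hσ
    refine mem_meanSimplex.2 ⟨hσ, ?_, ?_⟩
    · simp [sum_add_distrib, ← mul_sum, hd, ht1]
    · simp [add_mul, sum_add_distrib, mul_assoc, ← mul_sum, hdc, htc]
  have hboth := hnear.and ((continuous_neg.tendsto' 0 0 neg_zero).eventually hnear)
  obtain ⟨ε, ⟨hplus, hminus⟩, hε⟩ :=
    ((hboth.filter_mono nhdsWithin_le_nhds).and (self_mem_nhdsWithin (s := Set.Ioi 0))).exists
  exact ⟨ε, hε, hplus, by simpa [sub_eq_add_neg] using hminus⟩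

theorem card_ne_zero_le_two_of_mem_extremePoints {c : ι → ℝ} (hc : Function.Injective c)
    {v : ℝ} {t : ι → ℝ} (ht : t ∈ (meanSimplex c v).extremePoints ℝ) :
    #{i | t i ≠ 0} ≤ 2 := by
  classical
  by_contra! h
  obtain ⟨i, hi, j, hj, k, hk, hij, hik, hjk⟩ := two_lt_card.1 h
  simp only [mem_filter, mem_univ, true_and] at hi hj hk
  -- `d` is supported where `t ≠ 0`, preserves both linear constraints, and `d i ≠ 0` as `c` is
  -- injective, so `t` is the midpoint of two distinct points of the set.
  set d : ι → ℝ := Pi.single i (c k - c j) + Pi.single j (c i - c k) + Pi.single k (c j - c i)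
  obtain ⟨ε, hε, hplus, hminus⟩ := exists_add_smul_mem_meanSimplex ht.1 (d := d)
    (by simp [d, sum_add_distrib])
    (by
      simp only [d, Pi.add_apply, Pi.single_apply, add_mul, ite_mul, zero_mul, sum_add_distrib,
        sum_ite_eq', mem_univ, ↓reduceIte]
      ring)
    (fun m hm => by
      have : m ≠ i ∧ m ≠ j ∧ m ≠ k :=
        ⟨fun h => hi (h ▸ hm), fun h => hj (h ▸ hm), fun h => hk (h ▸ hm)⟩
      simp [d, this])
  have hmid : t ∈ openSegment ℝ (t + ε • d) (t - ε • d) :=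
    ⟨1 / 2, 1 / 2, by norm_num, by norm_num, by norm_num, by module⟩
  have := congrFun (ht.2 hplus hminus hmid) i
  simp [d, hij, hik, sub_eq_zero, hε.ne', hc.ne hjk.symm] at this

end MeanSimplex

theorem exists_lt_forall_eq_zero_of_card_ne_zero_le_two {ι M : Type*} [Fintype ι] [LinearOrder ι]
    [Zero M] [DecidableEq M] (hι : 2 ≤ Fintype.card ι) {t : ι → M} (ht : #{i | t i ≠ 0} ≤ 2) :
    ∃ a b, a < b ∧ ∀ x, x ≠ a → x ≠ b → t x = 0 := by
  obtain ⟨u, hsu, -, hu⟩ := exists_subsuperset_card_eq (subset_univ _) ht (by simpa using hι)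
  obtain ⟨x, y, hxy, rfl⟩ := card_eq_two.1 hu
  have hzero : ∀ z, z ≠ x → z ≠ y → t z = 0 := fun z hzx hzy => by
    by_contra h
    simpa [hzx, hzy] using hsu (mem_filter.2 ⟨mem_univ z, h⟩)
  rcases hxy.lt_or_gt with h | h
  exacts [⟨x, y, h, hzero⟩, ⟨y, x, h, fun z h₁ h₂ => hzero z h₂ h₁⟩]

theorem lossW_pos_s14 {W : ℝ → ℝ} (hW : StrictMonoOn W (Set.Icc 0 1)) {N i : ℕ} (hi : 1 ≤ i)
    (hiN : i ≤ N) : 0 < lossW W N i := by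
  have hi' : (1 : ℝ) ≤ i := by exact_mod_cast hi
  have hiN' : (i : ℝ) ≤ N := by exact_mod_cast hiN
  have hN : (0 : ℝ) < N := by linarith
  refine sub_pos.2 (hW ⟨?_, ?_⟩ ⟨by positivity, ?_⟩ ?_)
  · exact div_nonneg (by linarith) hN.le
  · exact div_le_one_of_le₀ (by linarith) hN.le
  · exact div_le_one_of_le₀ hiN' hN.le
  · exact div_lt_div_of_pos_right (by linarith) hN

noncomputable def cumLossW (W : ℝ → ℝ) (N k : ℕ) : ℝ :=
  ∑ i ∈ Icc 1 k, lossW W N i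

def IsAdmissiblePair (W : ℝ → ℝ) (N n : ℕ) (ybar v : ℝ) (l₁ l₂ : ℕ) : Prop :=
  l₁ < l₂ ∧ l₂ ≤ n ∧ ybar * cumLossW W N l₁ ≤ v ∧ v ≤ ybar * cumLossW W N l₂

noncomputable def pairValue (W : ℝ → ℝ) (N : ℕ) (β lam ybar v : ℝ) (l₁ l₂ : ℕ) : ℝ :=
  -(l₁ : ℝ) * (ybar / lam) ^ (1 / β) - ((l₂ : ℝ) - l₁) *
    ((v - ybar * cumLossW W N l₁) / (lam * ∑ i ∈ Icc (l₁ + 1) l₂, lossW W N i)) ^ (1 / β)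

theorem sum_Icc_one_add_sum_Icc {M : Type*} [AddCommMonoid M] (f : ℕ → M) {m k : ℕ}
    (h : m ≤ k) : ∑ i ∈ Icc 1 m, f i + ∑ i ∈ Icc (m + 1) k, f i = ∑ i ∈ Icc 1 k, f i := by
  simp only [← Ico_add_one_right_eq_Icc]
  exact sum_Ico_consecutive f (by omega) (by omega)

theorem sum_Icc_one_of_staircase {f : ℕ → ℝ} {l₁ l₂ n : ℕ} (h₁₂ : l₁ ≤ l₂) (h₂ : l₂ ≤ n)
    {A B : ℝ} (hA : ∀ i ∈ Icc 1 l₁, f i = A) (hB : ∀ i ∈ Icc (l₁ + 1) l₂, f i = B)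
    (h0 : ∀ i ∈ Icc (l₂ + 1) n, f i = 0) :
    ∑ i ∈ Icc 1 n, f i = l₁ * A + ((l₂ : ℝ) - l₁) * B := by
  rw [← sum_Icc_one_add_sum_Icc f h₂, ← sum_Icc_one_add_sum_Icc f h₁₂, sum_congr rfl hA,
    sum_congr rfl hB, sum_congr rfl h0]
  simp [Nat.cast_sub h₁₂]

section StepMixture

variable {n : ℕ} {ybar : ℝ}

noncomputable def stepMixture (ybar : ℝ) (t : Fin (n + 1) → ℝ) (i : ℕ) : ℝ :=
  ybar * ∑ k ∈ univ.filter fun k : Fin (n + 1) => i ≤ (k : ℕ), t k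

theorem stepMixture_zero (ybar : ℝ) (t : Fin (n + 1) → ℝ) :
    stepMixture ybar t 0 = ybar * ∑ k, t k := by
  simp [stepMixture]

theorem stepMixture_succ_self (ybar : ℝ) (t : Fin (n + 1) → ℝ) :
    stepMixture ybar t (n + 1) = 0 := by
  simp [stepMixture, filter_false_of_mem fun (k : Fin (n + 1)) _ => not_lt.2 k.is_le]

theorem stepMixture_antitone (hybar : 0 ≤ ybar) {t : Fin (n + 1) → ℝ} (ht : ∀ k, 0 ≤ t k) :
    Antitone (stepMixture ybar t) := fun _ _ hij =>
  mul_le_mul_of_nonneg_left (sum_le_sum_of_subset_of_nonneg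
    (monotone_filter_right _ fun _ _ hk => hij.trans hk) fun k _ _ => ht k) hybar

theorem stepMixture_add_smul (a b : ℝ) (t s : Fin (n + 1) → ℝ) (i : ℕ) :
    stepMixture ybar (a • t + b • s) i = a * stepMixture ybar t i + b * stepMixture ybar s i := by
  simp only [stepMixture, Pi.add_apply, Pi.smul_apply, smul_eq_mul, sum_add_distrib, ← mul_sum]
  ring

theorem continuous_stepMixture (ybar : ℝ) (i : ℕ) :
    Continuous fun t : Fin (n + 1) → ℝ => stepMixture ybar t i :=
  continuous_const.mul (continuous_finsetSum _ fun k _ => continuous_apply k)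

theorem sum_mul_stepMixture (h : ℕ → ℝ) (ybar : ℝ) (t : Fin (n + 1) → ℝ) :
    ∑ i ∈ Icc 1 n, h i * stepMixture ybar t i = ∑ k, t k * (ybar * ∑ i ∈ Icc 1 (k : ℕ), h i) := by
  simp only [stepMixture, mul_sum]
  rw [sum_comm' (t' := univ) (s' := fun k : Fin (n + 1) => Icc 1 (k : ℕ))]
  · exact sum_congr rfl fun k _ => sum_congr rfl fun i _ => by ring
  · intro i k
    simp only [mem_Icc, mem_filter, mem_univ, true_and, and_true]
    have := k.is_le
    omega

theorem stepMixture_sub_div (z : ℕ → ℝ) (hybar : ybar ≠ 0) {i : ℕ} (hi : i ≤ n + 1) :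
    stepMixture ybar (fun k : Fin (n + 1) => (z k - z (k + 1)) / ybar) i = z i - z (n + 1) := by
  have hfilter : (range (n + 1)).filter (i ≤ ·) = Ico i (n + 1) := by
    ext k; simp only [mem_filter, mem_range, mem_Ico]; omega
  rw [stepMixture, ← div_mul_cancel₀ (z i - z (n + 1)) hybar, mul_comm, sum_filter,
    Fin.sum_univ_eq_sum_range (fun k => if i ≤ k then (z k - z (k + 1)) / ybar else 0),
    ← sum_filter, hfilter, ← sum_div, ← neg_sub, ← sum_Ico_sub z hi, ← sum_neg_distrib]
  simp

theorem stepMixture_of_two_point {t : Fin (n + 1) → ℝ} {a b : Fin (n + 1)} (hab : a ≠ b)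
    (hzero : ∀ x, x ≠ a → x ≠ b → t x = 0) (i : ℕ) :
    stepMixture ybar t i =
      ybar * ((if i ≤ (a : ℕ) then t a else 0) + (if i ≤ (b : ℕ) then t b else 0)) := by
  rw [stepMixture, sum_filter, Fintype.sum_eq_add a b hab fun x hx => by simp [hzero x hx.1 hx.2]]

theorem convexOn_sum_stepMixture_rpow {c : Fin (n + 1) → ℝ} {v lam p : ℝ} (hybar : 0 ≤ ybar)
    (hlam : 0 < lam) (hp : 1 ≤ p) :
    ConvexOn ℝ (meanSimplex c v) fun t => ∑ i ∈ Icc 1 n, (stepMixture ybar t i / lam) ^ p := by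
  refine ⟨convex_meanSimplex c v, fun t ht s hs a b ha hb hab => ?_⟩
  have hnonneg : ∀ {t}, t ∈ meanSimplex c v → ∀ i, 0 ≤ stepMixture ybar t i / lam :=
    fun ht i => div_nonneg (mul_nonneg hybar (sum_nonneg fun k _ => (mem_meanSimplex.1 ht).1 k))
      hlam.le
  simp only [smul_eq_mul, mul_sum, ← sum_add_distrib, stepMixture_add_smul]
  refine sum_le_sum fun i _ => ?_
  have := (convexOn_rpow hp).2 (hnonneg ht i) (hnonneg hs i) ha hb hab
  simp only [smul_eq_mul] at this
  rwa [add_div, mul_div_assoc, mul_div_assoc]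

end StepMixture

section LossSubproblem

variable {W : ℝ → ℝ} {N n : ℕ} {β lam ybar v : ℝ}

noncomputable def mixingWeights (W : ℝ → ℝ) (N n : ℕ) (ybar v : ℝ) : Set (Fin (n + 1) → ℝ) :=
  meanSimplex (fun k => ybar * cumLossW W N k) v

theorem strictMono_cumLossW (hpos : ∀ i ∈ Icc 1 n, 0 < lossW W N i) :
    StrictMono fun k : Fin (n + 1) => cumLossW W N k :=
  Fin.strictMono_iff_lt_succ.2 fun k => by
    simp [cumLossW, sum_Icc_succ_top, hpos (k + 1) (mem_Icc.2 ⟨by omega, by omega⟩)]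

theorem sum_Icc_lossW_pos (hpos : ∀ i ∈ Icc 1 n, 0 < lossW W N i) {l₁ l₂ : ℕ} (h₁₂ : l₁ < l₂)
    (h₂ : l₂ ≤ n) : 0 < ∑ i ∈ Icc (l₁ + 1) l₂, lossW W N i :=
  sum_pos (fun i hi => hpos i (mem_Icc.2 ⟨by grind, (mem_Icc.1 hi).2.trans h₂⟩))
    (nonempty_Icc.2 h₁₂)

theorem plossFeasible_stepMixture (hybar : 0 ≤ ybar) {t : Fin (n + 1) → ℝ}
    (ht : t ∈ mixingWeights W N n ybar v) :
    PLossFeasible W N n ybar v (stepMixture ybar t) := by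
  obtain ⟨ht0, ht1, htc⟩ := mem_meanSimplex.1 ht
  have hanti := stepMixture_antitone hybar ht0
  refine ⟨?_, ?_, fun i _ => hanti i.le_succ, (sum_mul_stepMixture _ _ _).trans htc⟩
  · calc stepMixture ybar t 1 ≤ stepMixture ybar t 0 := hanti zero_le_one
      _ = ybar := by rw [stepMixture_zero, ht1, mul_one]
  · calc 0 = stepMixture ybar t (n + 1) := (stepMixture_succ_self ybar t).symm
      _ ≤ stepMixture ybar t n := hanti n.le_succ

theorem exists_mem_mixingWeights_stepMixture_eq (hybar : 0 < ybar) (hn : 1 ≤ n) {y : ℕ → ℝ}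
    (hy : PLossFeasible W N n ybar v y) :
    ∃ t ∈ mixingWeights W N n ybar v, ∀ i ∈ Icc 1 n, stepMixture ybar t i = y i := by
  obtain ⟨hy1, hyn, hstep, hsum⟩ := hy
  set z : ℕ → ℝ := fun k => if k = 0 then ybar else if k ≤ n then y k else 0
  have hz : ∀ i ≤ n + 1, stepMixture ybar (fun k : Fin (n + 1) => (z k - z (k + 1)) / ybar) i
      = z i := fun i hi => by
    rw [stepMixture_sub_div z hybar.ne' hi]
    simp [z]
  have heq : ∀ i ∈ Icc 1 n,
      stepMixture ybar (fun k : Fin (n + 1) => (z k - z (k + 1)) / ybar) i = y i := by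
    intro i hi
    obtain ⟨hi1, hin⟩ := mem_Icc.1 hi
    rw [hz i (by omega)]
    simp [z, hin, Nat.one_le_iff_ne_zero.1 hi1]
  refine ⟨_, mem_meanSimplex.2 ⟨fun k => div_nonneg (sub_nonneg.2 ?_) hybar.le, ?_, ?_⟩, heq⟩
  · rcases Nat.eq_zero_or_pos k with hk | hk
    · simp [z, hk, hn, hy1]
    · rcases k.is_le.lt_or_eq with hkn | hkn
      · simpa [z, hk.ne', hkn.le, Nat.succ_le_of_lt hkn] using
          hstep k (mem_Icc.2 ⟨hk, by omega⟩)
      · simpa [z, hkn, Nat.one_le_iff_ne_zero.1 hn] using hyn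
  · have := hz 0 (Nat.zero_le _)
    rw [stepMixture_zero] at this
    simpa [z, hybar.ne'] using this
  · exact (sum_mul_stepMixture _ _ _).symm.trans
      ((sum_congr rfl fun i hi => by rw [heq i hi]).trans hsum)

theorem isAdmissiblePair_and_neg_sum_eq_pairValue (hpos : ∀ i ∈ Icc 1 n, 0 < lossW W N i)
    (hybar : 0 ≤ ybar) (hβ : 0 < β) {t : Fin (n + 1) → ℝ} (ht : t ∈ mixingWeights W N n ybar v)
    {a b : Fin (n + 1)} (hab : a < b) (hzero : ∀ x, x ≠ a → x ≠ b → t x = 0) :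
    IsAdmissiblePair W N n ybar v a b ∧
      -∑ i ∈ Icc 1 n, (stepMixture ybar t i / lam) ^ (1 / β) = pairValue W N β lam ybar v a b := by
  obtain ⟨ht0, ht1, htc⟩ := mem_meanSimplex.1 ht
  rw [Fintype.sum_eq_add a b hab.ne fun x hx => hzero x hx.1 hx.2] at ht1
  rw [Fintype.sum_eq_add a b hab.ne fun x hx => by simp [hzero x hx.1 hx.2]] at htc
  set Δ := ∑ i ∈ Icc ((a : ℕ) + 1) b, lossW W N i
  have hΔ : 0 < Δ := sum_Icc_lossW_pos hpos hab b.is_le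
  have hcum : cumLossW W N b = cumLossW W N a + Δ := (sum_Icc_one_add_sum_Icc _ hab.le).symm
  have hv : v - ybar * cumLossW W N a = ybar * t b * Δ := by
    rw [← htc, hcum]
    linear_combination ybar * cumLossW W N a * ht1
  have hvb : ybar * cumLossW W N b - v = ybar * t a * Δ := by
    rw [← htc, hcum]
    linear_combination -(ybar * (cumLossW W N a + Δ)) * ht1
  refine ⟨⟨hab, b.is_le, ?_, ?_⟩, ?_⟩
  · linarith [mul_nonneg (mul_nonneg hybar (ht0 b)) hΔ.le]
  · linarith [mul_nonneg (mul_nonneg hybar (ht0 a)) hΔ.le]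
  rw [sum_Icc_one_of_staircase (A := (ybar / lam) ^ (1 / β)) (B := (ybar * t b / lam) ^ (1 / β))
    hab.le b.is_le, pairValue, hv, mul_div_mul_right _ _ hΔ.ne']
  · ring
  all_goals
    intro i hi
    obtain ⟨hi1, hi2⟩ := mem_Icc.1 hi
    rw [stepMixture_of_two_point hab.ne hzero]
  · simp [hi2, hi2.trans hab.le, ht1]
  · simp [show ¬ i ≤ (a : ℕ) by omega, hi2]
  · simp [show ¬ i ≤ (a : ℕ) by omega, show ¬ i ≤ (b : ℕ) by omega, hβ.ne']

theorem exists_mem_mixingWeights_of_isAdmissiblePair (hpos : ∀ i ∈ Icc 1 n, 0 < lossW W N i)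
    (hybar : 0 < ybar) {l₁ l₂ : ℕ} (h : IsAdmissiblePair W N n ybar v l₁ l₂) :
    ∃ t ∈ mixingWeights W N n ybar v, ∃ a b : Fin (n + 1), a < b ∧ (a : ℕ) = l₁ ∧ (b : ℕ) = l₂ ∧
      ∀ x, x ≠ a → x ≠ b → t x = 0 := by
  obtain ⟨h₁₂, h₂, hv₁, hv₂⟩ := h
  set a : Fin (n + 1) := ⟨l₁, by omega⟩
  set b : Fin (n + 1) := ⟨l₂, by omega⟩
  have hab : a < b := h₁₂
  set Δ := ∑ i ∈ Icc (l₁ + 1) l₂, lossW W N i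
  have hΔ : 0 < Δ := sum_Icc_lossW_pos hpos h₁₂ h₂
  have hcum : cumLossW W N l₂ = cumLossW W N l₁ + Δ := (sum_Icc_one_add_sum_Icc _ h₁₂.le).symm
  -- `s` is the weight at `l₂` forced by the mean constraint.
  set s := (v - ybar * cumLossW W N l₁) / (ybar * Δ)
  have hs₀ : 0 ≤ s := div_nonneg (by linarith) (by positivity)
  have hs₁ : s ≤ 1 := (div_le_one (by positivity)).2 (by rw [hcum, mul_add] at hv₂; linarith)
  have hsΔ : ybar * s * Δ = v - ybar * cumLossW W N l₁ := by
    simp only [s]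
    field_simp
  refine ⟨Pi.single a (1 - s) + Pi.single b s, mem_meanSimplex.2 ⟨fun k => ?_, ?_, ?_⟩,
    a, b, hab, rfl, rfl, fun x hxa hxb => by simp [hxa, hxb]⟩
  · simp only [Pi.add_apply, Pi.single_apply]
    split_ifs <;> linarith
  · simp [sum_add_distrib]
  · simp only [Pi.add_apply, add_mul, sum_add_distrib, Pi.single_apply, ite_mul, zero_mul,
      sum_ite_eq', mem_univ, if_true]
    simp only [a, b, hcum]
    linear_combination hsΔ

theorem exists_plossFeasible_of_isAdmissiblePair (hpos : ∀ i ∈ Icc 1 n, 0 < lossW W N i)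
    (hybar : 0 < ybar) (hβ : 0 < β) {l₁ l₂ : ℕ} (h : IsAdmissiblePair W N n ybar v l₁ l₂) :
    ∃ y, PLossFeasible W N n ybar v y ∧
      -∑ i ∈ Icc 1 n, (y i / lam) ^ (1 / β) = pairValue W N β lam ybar v l₁ l₂ := by
  obtain ⟨t, ht, a, b, hab, rfl, rfl, hzero⟩ :=
    exists_mem_mixingWeights_of_isAdmissiblePair hpos hybar h
  exact ⟨_, plossFeasible_stepMixture hybar.le ht,
    (isAdmissiblePair_and_neg_sum_eq_pairValue hpos hybar.le hβ ht hab hzero).2⟩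

theorem sum_rpow_le_of_plossFeasible (hpos : ∀ i ∈ Icc 1 n, 0 < lossW W N i) (hn : 1 ≤ n)
    (hybar : 0 < ybar) (hlam : 0 < lam) (hβ₀ : 0 < β) (hβ₁ : β < 1) {B : ℝ}
    (hB : ∀ l₁ l₂, IsAdmissiblePair W N n ybar v l₁ l₂ → -pairValue W N β lam ybar v l₁ l₂ ≤ B)
    {y : ℕ → ℝ} (hy : PLossFeasible W N n ybar v y) :
    ∑ i ∈ Icc 1 n, (y i / lam) ^ (1 / β) ≤ B := by
  have hp : 1 ≤ 1 / β := by rw [le_div_iff₀ hβ₀]; linarith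
  obtain ⟨t, ht, hty⟩ := exists_mem_mixingWeights_stepMixture_eq hybar hn hy
  rw [← sum_congr rfl fun i hi => congrArg (fun x => (x / lam) ^ (1 / β)) (hty i hi)]
  refine (convexOn_sum_stepMixture_rpow hybar.le hlam hp).le_of_forall_extremePoints_le
    (isCompact_meanSimplex _ _) (Continuous.continuousOn ?_) (fun e he => ?_) ht
  · exact continuous_finsetSum _ fun i _ =>
      ((continuous_stepMixture ybar i).div_const lam).rpow_const fun _ =>
        Or.inr (zero_le_one.trans hp)
  · obtain ⟨a, b, hab, hzero⟩ := exists_lt_forall_eq_zero_of_card_ne_zero_le_two (by simp; omega)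
      (card_ne_zero_le_two_of_mem_extremePoints
        ((strictMono_cumLossW hpos).const_mul hybar).injective he)
    obtain ⟨hadm, hval⟩ := isAdmissiblePair_and_neg_sum_eq_pairValue hpos hybar.le hβ₀
      (extremePoints_subset he) hab hzero
    exact (neg_eq_iff_eq_neg.1 hval).le.trans (hB _ _ hadm)

theorem exists_isAdmissiblePair_forall_pairValue_le (hn : 1 ≤ n) (hv₀ : 0 ≤ v)
    (hv₁ : v ≤ ybar * cumLossW W N n) :
    ∃ l₁ l₂, IsAdmissiblePair W N n ybar v l₁ l₂ ∧ ∀ l₁' l₂',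
      IsAdmissiblePair W N n ybar v l₁' l₂' →
        pairValue W N β lam ybar v l₁ l₂ ≤ pairValue W N β lam ybar v l₁' l₂' := by
  have hfin : {p : ℕ × ℕ | IsAdmissiblePair W N n ybar v p.1 p.2}.Finite :=
    ((Set.finite_Iic n).prod (Set.finite_Iic n)).subset fun p hp =>
      ⟨hp.1.le.trans hp.2.1, hp.2.1⟩
  obtain ⟨⟨l₁, l₂⟩, h, hmin⟩ := Set.exists_min_image _ (fun p => pairValue W N β lam ybar v p.1 p.2)
    hfin ⟨(0, n), hn, le_rfl, by simpa [cumLossW] using hv₀, hv₁⟩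
  exact ⟨l₁, l₂, h, fun l₁' l₂' h' => hmin (l₁', l₂') h'⟩

end LossSubproblem

/-- under `0 ≤ v ≤ ȳ·∑_{i≤n} h⁻_i`, the optimal value (minimum) of the
price-constrained loss subproblem equals the minimum over integer pairs
`0 ≤ ℓ₁ < ℓ₂ ≤ n` with `ȳ·∑_{i≤ℓ₁} h⁻_i ≤ v ≤ ȳ·∑_{i≤ℓ₂} h⁻_i` of
`−ℓ₁·(ȳ/λ)^{1/β} − (ℓ₂−ℓ₁)·((v − ȳ·∑_{i≤ℓ₁} h⁻_i)/(λ·∑_{i=ℓ₁+1}^{ℓ₂} h⁻_i))^{1/β}`. -/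
theorem ploss_optimal_value (W : ℝ → ℝ) (N n : ℕ) (β lam ybar v : ℝ)
    (hW : IsPWF W) (hn1 : 1 ≤ n) (hnN : n ≤ N)
    (hβ0 : 0 < β) (hβ1 : β < 1) (hlam : 0 < lam) (hybar : 0 < ybar)
    (hv0 : 0 ≤ v) (hv1 : v ≤ ybar * ∑ i ∈ Finset.Icc 1 n, lossW W N i) :
    ∃ m : ℝ,
      IsLeast {S : ℝ | ∃ y : ℕ → ℝ, PLossFeasible W N n ybar v y ∧
          S = -∑ i ∈ Finset.Icc 1 n, (y i / lam) ^ (1 / β)} m ∧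
      IsLeast {S : ℝ | ∃ l1 l2 : ℕ, l1 < l2 ∧ l2 ≤ n ∧
          ybar * ∑ i ∈ Finset.Icc 1 l1, lossW W N i ≤ v ∧
          v ≤ ybar * ∑ i ∈ Finset.Icc 1 l2, lossW W N i ∧
          S = -(l1 : ℝ) * (ybar / lam) ^ (1 / β) -
            ((l2 : ℝ) - (l1 : ℝ)) *
              ((v - ybar * ∑ i ∈ Finset.Icc 1 l1, lossW W N i) /
                (lam * ∑ i ∈ Finset.Icc (l1 + 1) l2, lossW W N i)) ^ (1 / β)} m := by
  have hpos : ∀ i ∈ Icc 1 n, 0 < lossW W N i := fun i hi =>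
    lossW_pos_s14 hW.1.1 (mem_Icc.1 hi).1 ((mem_Icc.1 hi).2.trans hnN)
  obtain ⟨l₁, l₂, hadm, hmin⟩ :=
    exists_isAdmissiblePair_forall_pairValue_le (β := β) (lam := lam) hn1 hv0 hv1
  refine ⟨pairValue W N β lam ybar v l₁ l₂, ⟨?_, ?_⟩, ⟨l₁, l₂, hadm.1, hadm.2.1, hadm.2.2.1,
    hadm.2.2.2, rfl⟩, ?_⟩
  · obtain ⟨y, hy, hval⟩ := exists_plossFeasible_of_isAdmissiblePair hpos hybar hβ0 hadm
    exact ⟨y, hy, hval.symm⟩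
  · rintro S ⟨y, hy, rfl⟩
    have := sum_rpow_le_of_plossFeasible hpos hn1 hybar hlam hβ0 hβ1
      (fun a b h => neg_le_neg (hmin a b h)) hy
    linarith
  · rintro S ⟨a, b, h₁, h₂, h₃, h₄, rfl⟩
    exact hmin a b ⟨h₁, h₂, h₃, h₄⟩
end
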